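/- arXiv:1009.3248 — 8 statements merged into one kernel-verified Lean document; each statement's English description precedes it below -/
import Mathlib

section
/- Finite time Evans–Searles identity: if the system is TRI then, for every nonzero n ∈ ℤ and every bounded measurable f : ℝ → ℝ, ∫_M f(−Σ^n(x)) dω(x) = ∫_M e^{−n Σ^n(x)} f(Σ^n(x)) dω(x); equivalently, the reflected law P̄_n is equivalent to P_n and dP̄_n/dP_n(s) = e^{−ns} for P_n-a.e. s ∈ ℝ. -/
/-!
The pushforward of `ω` by `φ^{-n}` can be computed in two ways. Undoing the change of variables
`φ^n` gives it the density `(Δ^n ∘ φ^n)⁻¹ = e^{-c^n} = e^{-nΣ^n}`; conjugating by the time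
reversal, which turns `φ^n` into `φ^{-n}` and preserves `ω`, gives it the density `Δ^n ∘ θ`.
Comparing the two densities yields `Σ^n ∘ φ^{-n} ∘ θ = -Σ^n` a.e., so the law of `-Σ^n` under `ω`
is the law of `Σ^n` under `e^{-nΣ^n} ω`, which is `e^{-ns} P_n(ds)`.
-/

open MeasureTheory

/-- `Δ^n := d(ω∘φ^{-n})/dω` as a real-valued function, where `T n` is `φ^n`. -/
noncomputable def Delta {M : Type*} [MeasurableSpace M] (ω : Measure M) (T : ℤ → M → M)
    (n : ℤ) (x : M) : ℝ :=
  ((ω.map (T n)).rnDeriv ω x).toReal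

/-- The entropy cocycle `c^n := (log Δ^n) ∘ φ^n`. -/
noncomputable def ecoc {M : Type*} [MeasurableSpace M] (ω : Measure M) (T : ℤ → M → M)
    (n : ℤ) (x : M) : ℝ :=
  Real.log (Delta ω T n (T n x))

/-- The mean entropy production rate `Σ^n := c^n / n`. -/
noncomputable def meanSigma {M : Type*} [MeasurableSpace M] (ω : Measure M) (T : ℤ → M → M)
    (n : ℤ) (x : M) : ℝ :=
  ecoc ω T n x / (n : ℝ)

open Measure
open scoped ENNReal

section Flow

variable {M : Type*} {T : ℤ → M → M}

theorem flow_apply_apply (hTadd : ∀ n m : ℤ, T (n + m) = T n ∘ T m) (a b : ℤ) (x : M) :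
    T a (T b x) = T (a + b) x :=
  (congrFun (hTadd a b) x).symm

theorem flow_neg_apply_apply (hT0 : T 0 = id) (hTadd : ∀ n m : ℤ, T (n + m) = T n ∘ T m)
    (n : ℤ) (x : M) : T (-n) (T n x) = x := by
  rw [flow_apply_apply hTadd, neg_add_cancel, hT0, id]

theorem flow_apply_neg_apply (hT0 : T 0 = id) (hTadd : ∀ n m : ℤ, T (n + m) = T n ∘ T m)
    (n : ℤ) (x : M) : T n (T (-n) x) = x := by
  simpa using flow_neg_apply_apply hT0 hTadd (-n) x

def flowEquiv [MeasurableSpace M] (hT0 : T 0 = id) (hTadd : ∀ n m : ℤ, T (n + m) = T n ∘ T m)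
    (hTmeas : ∀ n : ℤ, Measurable (T n)) (n : ℤ) : M ≃ᵐ M where
  toFun := T n
  invFun := T (-n)
  left_inv := flow_neg_apply_apply hT0 hTadd n
  right_inv := flow_apply_neg_apply hT0 hTadd n
  measurable_toFun := hTmeas n
  measurable_invFun := hTmeas (-n)

theorem semiconj_flow_of_semiconj_one {θ : M → M} (hT0 : T 0 = id)
    (hTadd : ∀ n m : ℤ, T (n + m) = T n ∘ T m) (hθinv : Function.Involutive θ)
    (hθT : Function.Semiconj θ (T 1) (T (-1))) (m : ℤ) :
    Function.Semiconj θ (T m) (T (-m)) := by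
  have hθT' : Function.Semiconj θ (T (-1)) (T 1) := fun x =>
    calc θ (T (-1) x) = θ (T (-1) (θ (θ x))) := by rw [hθinv x]
      _ = θ (θ (T 1 (θ x))) := by rw [hθT]
      _ = T 1 (θ x) := hθinv _
  induction m using Int.induction_on with
  | zero => simp [hT0, Function.Semiconj]
  | succ i ih =>
    rw [hTadd, neg_add, hTadd]
    exact ih.comp_right hθT
  | pred i ih =>
    rw [sub_eq_add_neg, hTadd, neg_add, hTadd]
    simpa using ih.comp_right hθT'

end Flow

section WithDensity

variable {α β : Type*} [MeasurableSpace α] [MeasurableSpace β]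

theorem map_withDensity_comp (μ : Measure α) {f : α → β} {g : β → ℝ≥0∞} (hf : Measurable f)
    (hg : Measurable g) : (μ.withDensity (g ∘ f)).map f = (μ.map f).withDensity g := by
  ext s hs
  rw [map_apply hf hs, withDensity_apply _ (hf hs), withDensity_apply _ hs,
    setLIntegral_map hs hg hf]
  rfl

theorem MeasurableEquiv.map_withDensity (e : α ≃ᵐ β) (μ : Measure α) {g : α → ℝ≥0∞}
    (hg : Measurable g) : (μ.withDensity g).map e = (μ.map e).withDensity (g ∘ e.symm) := by
  simpa [Function.comp_def] using map_withDensity_comp μ e.measurable (hg.comp e.symm.measurable)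

theorem integral_comp_eq_integral_mul_of_map_eq_withDensity {ω : Measure α} {X Y : α → β}
    (hX : Measurable X) (hY : Measurable Y) {ρ : β → ℝ} (hρ : Measurable ρ)
    (hρ_nonneg : ∀ s, 0 ≤ ρ s) (h : ω.map Y = (ω.map X).withDensity fun s => .ofReal (ρ s))
    {f : β → ℝ} (hf : Measurable f) : ∫ x, f (Y x) ∂ω = ∫ x, ρ (X x) * f (X x) ∂ω := by
  rw [← integral_map hY.aemeasurable hf.aestronglyMeasurable, h,
    integral_withDensity_eq_integral_toReal_smul hρ.ennreal_ofReal
      (ae_of_all _ fun _ => ENNReal.ofReal_lt_top),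
    integral_map hX.aemeasurable (by fun_prop)]
  simp [ENNReal.toReal_ofReal (hρ_nonneg _)]

end WithDensity

section RadonNikodym

variable {α : Type*} [MeasurableSpace α] {μ : Measure α} [IsFiniteMeasure μ]

theorem map_symm_eq_withDensity_inv_rnDeriv (e : α ≃ᵐ α) (he : μ.map e ≪ μ)
    (he' : μ ≪ μ.map e) :
    μ.map e.symm = μ.withDensity fun x => ((μ.map e).rnDeriv μ (e x))⁻¹ := by
  set D := (μ.map e).rnDeriv μ
  have hμ : μ = (μ.map e.symm).withDensity (D ∘ e) :=
    calc μ = (μ.map e).map e.symm := (MeasurableEquiv.map_symm_map e).symm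
      _ = (μ.withDensity D).map e.symm := by rw [withDensity_rnDeriv_eq _ _ he]
      _ = _ := e.symm.map_withDensity μ (measurable_rnDeriv _ _)
  have hD_ne_zero : ∀ᵐ y ∂μ.map e.symm, D (e y) ≠ 0 := by
    rw [e.symm.measurableEmbedding.ae_map_iff]
    filter_upwards [rnDeriv_pos' he'] with x hx
    simpa using hx.ne'
  have hD_ne_top : ∀ᵐ y ∂μ.map e.symm, D (e y) ≠ ∞ := by
    rw [e.symm.measurableEmbedding.ae_map_iff]
    filter_upwards [rnDeriv_lt_top (μ.map e) μ] with x hx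
    simpa using hx.ne
  calc μ.map e.symm
      = ((μ.map e.symm).withDensity (D ∘ e)).withDensity fun x => ((D ∘ e) x)⁻¹ :=
        (withDensity_inv_same ((measurable_rnDeriv _ _).comp e.measurable) hD_ne_zero
          hD_ne_top).symm
    _ = _ := by rw [← hμ]; rfl

theorem map_eq_withDensity_rnDeriv_comp_symm_of_semiconj (θ : α ≃ᵐ α) (hθ : μ.map θ = μ)
    {f g : α → α} (hf : Measurable f) (hg : Measurable g) (hfg : Function.Semiconj θ f g)
    (hf_ac : μ.map f ≪ μ) : μ.map g = μ.withDensity ((μ.map f).rnDeriv μ ∘ θ.symm) :=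
  calc μ.map g = (μ.map θ).map g := by rw [hθ]
    _ = (μ.map f).map θ := by rw [map_map hg θ.measurable, map_map θ.measurable hf, hfg.comp_eq]
    _ = (μ.withDensity ((μ.map f).rnDeriv μ)).map θ := by rw [withDensity_rnDeriv_eq _ _ hf_ac]
    _ = (μ.map θ).withDensity ((μ.map f).rnDeriv μ ∘ θ.symm) :=
        θ.map_withDensity μ (measurable_rnDeriv _ _)
    _ = _ := by rw [hθ]

end RadonNikodym

section EntropyProduction

variable {M : Type*} [MeasurableSpace M] {ω : Measure M} {T : ℤ → M → M}

theorem measurable_meanSigma {n : ℤ} (hTn : Measurable (T n)) : Measurable (meanSigma ω T n) :=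
  (Real.measurable_log.comp
    ((measurable_rnDeriv _ _).comp hTn).ennreal_toReal).div_const _

theorem map_flow_neg_eq_withDensity [IsFiniteMeasure ω] (hT0 : T 0 = id)
    (hTadd : ∀ n m : ℤ, T (n + m) = T n ∘ T m) (hTmeas : ∀ n : ℤ, Measurable (T n)) {n : ℤ}
    (hn_ac : ω.map (T n) ≪ ω) (hn_ac' : ω ≪ ω.map (T n)) :
    ω.map (T (-n)) = ω.withDensity fun x => ((ω.map (T n)).rnDeriv ω (T n x))⁻¹ :=
  map_symm_eq_withDensity_inv_rnDeriv (flowEquiv hT0 hTadd hTmeas n) hn_ac hn_ac'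

theorem rnDeriv_map_flow_comp_reversal_ae_eq_inv [IsFiniteMeasure ω] (hT0 : T 0 = id)
    (hTadd : ∀ n m : ℤ, T (n + m) = T n ∘ T m) (hTmeas : ∀ n : ℤ, Measurable (T n))
    {θ : M → M} (hθmeas : Measurable θ) (hθinv : Function.Involutive θ)
    (hθT : Function.Semiconj θ (T 1) (T (-1))) (hθω : ω.map θ = ω) {n : ℤ}
    (hn_ac : ω.map (T n) ≪ ω) (hn_ac' : ω ≪ ω.map (T n)) :
    (fun x => (ω.map (T n)).rnDeriv ω (θ x))
      =ᵐ[ω] fun x => ((ω.map (T n)).rnDeriv ω (T n x))⁻¹ := by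
  have hθ := map_eq_withDensity_rnDeriv_comp_symm_of_semiconj
    (MeasurableEquiv.ofInvolutive θ hθinv hθmeas) hθω (hTmeas n) (hTmeas (-n))
    (semiconj_flow_of_semiconj_one hT0 hTadd hθinv hθT n) hn_ac
  refine (withDensity_eq_iff_of_sigmaFinite ?_ ?_).1
    (hθ.symm.trans (map_flow_neg_eq_withDensity hT0 hTadd hTmeas hn_ac hn_ac'))
  · exact ((measurable_rnDeriv _ _).comp hθmeas).aemeasurable
  · exact ((measurable_rnDeriv _ _).comp (hTmeas n)).inv.aemeasurable

theorem meanSigma_flow_neg_comp_reversal_ae_eq_neg [IsFiniteMeasure ω] (hT0 : T 0 = id)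
    (hTadd : ∀ n m : ℤ, T (n + m) = T n ∘ T m) (hTmeas : ∀ n : ℤ, Measurable (T n))
    {θ : M → M} (hθmeas : Measurable θ) (hθinv : Function.Involutive θ)
    (hθT : Function.Semiconj θ (T 1) (T (-1))) (hθω : ω.map θ = ω) {n : ℤ}
    (hn_ac : ω.map (T n) ≪ ω) (hn_ac' : ω ≪ ω.map (T n)) :
    (fun x => meanSigma ω T n (T (-n) (θ x))) =ᵐ[ω] fun x => -meanSigma ω T n x := by
  filter_upwards [rnDeriv_map_flow_comp_reversal_ae_eq_inv hT0 hTadd hTmeas hθmeas hθinv hθT hθω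
    hn_ac hn_ac'] with x hx
  simp only [meanSigma, ecoc, Delta]
  rw [flow_apply_neg_apply hT0 hTadd, hx, ENNReal.toReal_inv, Real.log_inv, neg_div]

theorem inv_rnDeriv_map_flow_ae_eq_exp [IsFiniteMeasure ω] {n : ℤ} (hn : n ≠ 0)
    (hTn : Measurable (T n)) (hn_ac : ω.map (T n) ≪ ω) (hn_ac' : ω ≪ ω.map (T n)) :
    (fun x => ((ω.map (T n)).rnDeriv ω (T n x))⁻¹)
      =ᵐ[ω] fun x => ENNReal.ofReal (Real.exp (-n * meanSigma ω T n x)) := by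
  have hD : ∀ᵐ x ∂ω, 0 < (ω.map (T n)).rnDeriv ω (T n x) ∧ (ω.map (T n)).rnDeriv ω (T n x) < ∞ :=
    ae_of_ae_map hTn.aemeasurable <| hn_ac.ae_le <| (rnDeriv_pos' hn_ac').and
      (rnDeriv_lt_top _ _)
  filter_upwards [hD] with x ⟨hpos, hlt⟩
  have hr : 0 < ((ω.map (T n)).rnDeriv ω (T n x)).toReal := ENNReal.toReal_pos hpos.ne' hlt.ne
  have hn' : (n : ℝ) ≠ 0 := Int.cast_ne_zero.mpr hn
  rw [meanSigma, ecoc, Delta, neg_mul, mul_div_cancel₀ _ hn', Real.exp_neg, Real.exp_log hr,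
    ENNReal.ofReal_inv_of_pos hr, ENNReal.ofReal_toReal hlt.ne]

theorem map_neg_meanSigma_eq_withDensity [IsFiniteMeasure ω] (hT0 : T 0 = id)
    (hTadd : ∀ n m : ℤ, T (n + m) = T n ∘ T m) (hTmeas : ∀ n : ℤ, Measurable (T n))
    {θ : M → M} (hθmeas : Measurable θ) (hθinv : Function.Involutive θ)
    (hθT : Function.Semiconj θ (T 1) (T (-1))) (hθω : ω.map θ = ω) {n : ℤ} (hn : n ≠ 0)
    (hn_ac : ω.map (T n) ≪ ω) (hn_ac' : ω ≪ ω.map (T n)) :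
    ω.map (fun x => -meanSigma ω T n x)
      = (ω.map (meanSigma ω T n)).withDensity fun s => ENNReal.ofReal (Real.exp (-n * s)) := by
  have hS : Measurable (meanSigma ω T n) := measurable_meanSigma (hTmeas n)
  calc ω.map (fun x => -meanSigma ω T n x)
      = ω.map (meanSigma ω T n ∘ T (-n) ∘ θ) :=
        map_congr (meanSigma_flow_neg_comp_reversal_ae_eq_neg hT0 hTadd hTmeas hθmeas hθinv hθT
          hθω hn_ac hn_ac').symm
    _ = ((ω.map θ).map (T (-n))).map (meanSigma ω T n) := by
        rw [map_map (hTmeas _) hθmeas, map_map hS ((hTmeas _).comp hθmeas)]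
    _ = (ω.withDensity fun x => ENNReal.ofReal (Real.exp (-n * meanSigma ω T n x))).map
          (meanSigma ω T n) := by
        rw [hθω, map_flow_neg_eq_withDensity hT0 hTadd hTmeas hn_ac hn_ac',
          withDensity_congr_ae (inv_rnDeriv_map_flow_ae_eq_exp hn (hTmeas n) hn_ac hn_ac')]
    _ = _ := map_withDensity_comp (g := fun s => ENNReal.ofReal (Real.exp (-n * s))) ω hS
          (by fun_prop)

end EntropyProduction

/-- Finite time Evans–Searles identity for TRI systems: the reflected law of `Σ^n` has density
`e^{-ns}` with respect to the law of `Σ^n`, equivalently the change-of-variables integral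
identity holds for every bounded measurable `f`. -/
theorem finite_time_evans_searles
    {M : Type*} [MeasurableSpace M] (ω : Measure M) [IsProbabilityMeasure ω]
    (T : ℤ → M → M)
    (hT0 : T 0 = id)
    (hTadd : ∀ n m : ℤ, T (n + m) = T n ∘ T m)
    (hTmeas : ∀ n : ℤ, Measurable (T n))
    (hequiv : ∀ n : ℤ, ω.map (T n) ≪ ω ∧ ω ≪ ω.map (T n))
    (θ : M → M) (hθmeas : Measurable θ)
    (hθinv : ∀ x, θ (θ x) = x)
    (hθT : θ ∘ T 1 = T (-1) ∘ θ)
    (hθω : ω.map θ = ω)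
    (n : ℤ) (hn : n ≠ 0) :
    (∀ (f : ℝ → ℝ), Measurable f → ∀ C : ℝ, (∀ s, |f s| ≤ C) →
      ∫ x, f (-(meanSigma ω T n x)) ∂ω
        = ∫ x, Real.exp (-(n : ℝ) * meanSigma ω T n x) * f (meanSigma ω T n x) ∂ω) ∧
    ((ω.map (meanSigma ω T n)).map (fun s : ℝ => -s) ≪ ω.map (meanSigma ω T n) ∧
     ω.map (meanSigma ω T n) ≪ (ω.map (meanSigma ω T n)).map (fun s : ℝ => -s) ∧
     ((ω.map (meanSigma ω T n)).map (fun s : ℝ => -s)).rnDeriv (ω.map (meanSigma ω T n))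
        =ᵐ[ω.map (meanSigma ω T n)] fun s : ℝ => ENNReal.ofReal (Real.exp (-(n : ℝ) * s))) := by
  have hS : Measurable (meanSigma ω T n) := measurable_meanSigma (hTmeas n)
  have hlaw := map_neg_meanSigma_eq_withDensity hT0 hTadd hTmeas hθmeas hθinv (congrFun hθT)
    hθω hn (hequiv n).1 (hequiv n).2
  have hreflected : (ω.map (meanSigma ω T n)).map (fun s : ℝ => -s)
      = (ω.map (meanSigma ω T n)).withDensity fun s => ENNReal.ofReal (Real.exp (-n * s)) :=
    (map_map measurable_neg hS).trans hlaw
  refine ⟨fun f hf _ _ => ?_, ?_, ?_, ?_⟩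
  · exact integral_comp_eq_integral_mul_of_map_eq_withDensity hS hS.neg (by fun_prop)
      (fun _ => (Real.exp_pos _).le) hlaw hf
  · rw [hreflected]
    exact withDensity_absolutelyContinuous _ _
  · rw [hreflected]
    exact withDensity_absolutelyContinuous' (by fun_prop) (ae_of_all _ fun _ => by positivity)
  · rw [hreflected]
    exact rnDeriv_withDensity _ (by fun_prop)
end

section
/- With e_n(α) := log ∫_M (Δ^n)^α dω ∈ (−∞, +∞]: (1) for every n ∈ ℤ and α ∈ ℝ, e_n(α) = e_{−n}(1 − α), i.e. ∫_M (Δ^n)^α dω = ∫_M (Δ^{−n})^{1−α} dω; (2) if the system is TRI, then e_{−n}(α) = e_n(α) for all n ∈ ℤ and α ∈ ℝ, and hence the finite time Evans–Searles symmetry e_n(α) = e_n(1 − α) holds. -/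
open MeasureTheory ENNReal

/-- The Rényi-type functional `e_n(α)` is `log` of this quantity:
`∫ (Δ^n)^α dω` computed in `[0,∞]`, where `Δ^n := d(ω∘φ^{-n})/dω` and `T n` is `φ^n`. -/
noncomputable def renyiInt {M : Type*} [MeasurableSpace M] (ω : Measure M) (T : ℤ → M → M)
    (n : ℤ) (α : ℝ) : ℝ≥0∞ :=
  ∫⁻ x, ((ω.map (T n)).rnDeriv ω x) ^ α ∂ω

/-! For mutually absolutely continuous `μ, ν` one has `dν/dμ = (dμ/dν)⁻¹`, so
`∫ (dμ/dν)^α dν = ∫ (dμ/dν)^(α-1) dμ = ∫ (dν/dμ)^(1-α) dμ`; moreover such integrals do not change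
when both measures are pushed forward by the same measurable embedding. Part (1) applies the first
fact to `(ω_n, ω)` and then pushes `(ω_{-n}, ω)` forward by `φ^n`, which gives `(ω, ω_n)`.
For part (2), `θ` conjugates `φ^n` to `φ^{-n}` and preserves `ω`, so pushing forward by `θ`
turns `(ω_n, ω)` into `(ω_{-n}, ω)`. -/

open Function

namespace MeasureTheory.Measure

variable {α β : Type*} {mα : MeasurableSpace α} {mβ : MeasurableSpace β}

theorem lintegral_rnDeriv_rpow_eq_lintegral_rnDeriv_rpow_one_sub {μ ν : Measure α}
    [SigmaFinite μ] [SigmaFinite ν] (hμν : μ ≪ ν) (hνμ : ν ≪ μ) (a : ℝ) :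
    ∫⁻ x, μ.rnDeriv ν x ^ a ∂ν = ∫⁻ x, ν.rnDeriv μ x ^ (1 - a) ∂μ := by
  rw [← lintegral_rnDeriv_mul hμν
    ((measurable_rnDeriv ν μ).pow_const (1 - a)).aemeasurable]
  refine lintegral_congr_ae ?_
  filter_upwards [inv_rnDeriv' hνμ, hνμ.ae_le (rnDeriv_pos hμν), rnDeriv_ne_top μ ν]
    with x hinv hpos hne_top
  rw [← hinv, Pi.inv_apply, inv_rpow, ← rpow_neg, neg_sub]
  conv_lhs => rw [← add_sub_cancel 1 a, rpow_add _ _ hpos.ne' hne_top, rpow_one]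

theorem _root_.MeasurableEmbedding.lintegral_comp_rnDeriv_map {f : α → β}
    (hf : MeasurableEmbedding f) (μ ν : Measure α) [SigmaFinite μ] [SigmaFinite ν]
    (g : ℝ≥0∞ → ℝ≥0∞) :
    ∫⁻ y, g ((μ.map f).rnDeriv (ν.map f) y) ∂(ν.map f) = ∫⁻ x, g (μ.rnDeriv ν x) ∂ν := by
  rw [hf.lintegral_map]
  exact lintegral_congr_ae ((hf.rnDeriv_map μ ν).fun_comp g)

end MeasureTheory.Measure

section Flow

variable {M : Type*} {T : ℤ → M → M}

theorem flow_leftInverse_neg (hT0 : T 0 = id) (hTadd : ∀ n m, T (n + m) = T n ∘ T m) (n : ℤ) :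
    LeftInverse (T n) (T (-n)) := fun x => by
  rw [← comp_apply (f := T n), ← hTadd, add_neg_cancel, hT0, id]

theorem flow_semiconj_neg (hT0 : T 0 = id) (hTadd : ∀ n m, T (n + m) = T n ∘ T m)
    {θ : M → M} (hθ : Semiconj θ (T 1) (T (-1))) (n : ℤ) : Semiconj θ (T n) (T (-n)) := by
  have hθ' : Semiconj θ (T (-1)) (T 1) :=
    hθ.inverses_right (flow_leftInverse_neg hT0 hTadd 1)
      (flow_leftInverse_neg hT0 hTadd 1)
  induction n using Int.induction_on with
  | zero => simpa [hT0] using Semiconj.id_right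
  | succ k ih => rw [hTadd, neg_add, hTadd]; exact ih.comp_right hθ
  | pred k ih =>
    rw [sub_eq_add_neg, hTadd, neg_add, neg_neg, hTadd]
    simpa using ih.comp_right hθ'

end Flow

/-- (1) `e_n(α) = e_{-n}(1-α)`, i.e. `∫ (Δ^n)^α dω = ∫ (Δ^{-n})^{1-α} dω`;
(2) if the system is TRI then `e_{-n}(α) = e_n(α)`, hence the finite time Evans–Searles
symmetry `e_n(α) = e_n(1-α)` holds. -/
theorem finite_time_ES_symmetry
    {M : Type*} [MeasurableSpace M] (ω : Measure M) [IsProbabilityMeasure ω]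
    (T : ℤ → M → M)
    (hT0 : T 0 = id)
    (hTadd : ∀ n m : ℤ, T (n + m) = T n ∘ T m)
    (hTmeas : ∀ n : ℤ, Measurable (T n))
    (hequiv : ∀ n : ℤ, ω.map (T n) ≪ ω ∧ ω ≪ ω.map (T n)) :
    (∀ (n : ℤ) (α : ℝ), renyiInt ω T n α = renyiInt ω T (-n) (1 - α)) ∧
    (∀ θ : M → M, Measurable θ → (∀ x, θ (θ x) = x) →
      θ ∘ T 1 = T (-1) ∘ θ → ω.map θ = ω →
      (∀ (n : ℤ) (α : ℝ), renyiInt ω T (-n) α = renyiInt ω T n α) ∧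
      (∀ (n : ℤ) (α : ℝ), renyiInt ω T n α = renyiInt ω T n (1 - α))) := by
  have hembed (n : ℤ) : MeasurableEmbedding (T n) :=
    (MeasurableEquiv.mk ⟨T n, T (-n), by simpa using flow_leftInverse_neg hT0 hTadd (-n),
      flow_leftInverse_neg hT0 hTadd n⟩ (hTmeas n) (hTmeas (-n))).measurableEmbedding
  have hmap (n : ℤ) : (ω.map (T (-n))).map (T n) = ω := by
    rw [Measure.map_map (hTmeas n) (hTmeas (-n)), ← hTadd, add_neg_cancel, hT0, Measure.map_id]
  have duality (n : ℤ) (α : ℝ) : renyiInt ω T n α = renyiInt ω T (-n) (1 - α) := by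
    calc renyiInt ω T n α
        = ∫⁻ x, ω.rnDeriv (ω.map (T n)) x ^ (1 - α) ∂ω.map (T n) :=
          Measure.lintegral_rnDeriv_rpow_eq_lintegral_rnDeriv_rpow_one_sub
            (hequiv n).1 (hequiv n).2 α
      _ = ∫⁻ x, ((ω.map (T (-n))).map (T n)).rnDeriv (ω.map (T n)) x ^ (1 - α)
            ∂ω.map (T n) := by rw [hmap]
      _ = renyiInt ω T (-n) (1 - α) :=
          (hembed n).lintegral_comp_rnDeriv_map _ ω (· ^ (1 - α))
  refine ⟨duality, fun θ hθ hθθ hθT hθω => ?_⟩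
  have reversal (n : ℤ) (α : ℝ) : renyiInt ω T (-n) α = renyiInt ω T n α := by
    have hconj : (ω.map (T n)).map θ = ω.map (T (-n)) := by
      rw [Measure.map_map hθ (hTmeas n), (flow_semiconj_neg hT0 hTadd (congrFun hθT) n).comp_eq,
        ← Measure.map_map (hTmeas (-n)) hθ, hθω]
    calc renyiInt ω T (-n) α
        = ∫⁻ x, ((ω.map (T n)).map θ).rnDeriv (ω.map θ) x ^ α ∂ω.map θ := by
          rw [hconj, hθω]; rfl
      _ = renyiInt ω T n α :=
          (MeasurableEquiv.ofInvolutive θ hθθ hθ).measurableEmbedding.lintegral_comp_rnDeriv_map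
            _ ω (· ^ α)
  exact ⟨reversal, fun n α => (duality n α).trans (reversal n (1 - α))⟩
end

section
/- Properties of the entropy production observable: (1) the integral ∫_M σ dω is well defined in [0, +∞] (the negative part of σ is ω-integrable) and satisfies ∫_M σ dω ≥ 0; (2) the integral ∫_M σ dω_{−1} is well defined in [−∞, 0] (the positive part of σ is ω_{−1}-integrable) and satisfies ∫_M σ dω_{−1} ≤ 0; (3) if θ is a time reversal of the system, then σ ∘ θ = −σ ∘ φ^{−1} ω-almost everywhere. -/
/-!
Write `ν := ω ∘ φ⁻¹` and `D := dν/dω`, so that `σ = log D ∘ φ`. Then `∫ σ dω = ∫ log D dν` is the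
relative entropy of `ν` with respect to `ω`, nonnegative because `t log t ≥ t - 1`, while
`∫ σ dω₋₁ = ∫ log D dω ≤ ∫ (D - 1) dω = 0` because `log t ≤ t - 1`. The same bounds give
`t (log t)⁻ ≤ 1` and `(log t)⁺ ≤ t`, which make the relevant parts integrable. With positive and
negative parts as `ℝ≥0∞`-valued integrals, each inequality is proved with the total mass added
to both sides and then cancelled. Under a time reversal, `φ ∘ θ` exchanges `ω` and `ν`, so
`D ∘ φ ∘ θ = 1 / D`, which is `σ ∘ θ = -σ ∘ φ⁻¹`.
-/

open MeasureTheory ENNReal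

/-- The entropy production observable `σ := (log Δ^1) ∘ φ`. -/
noncomputable def entProd {M : Type*} [MeasurableSpace M] (ω : Measure M) (T : ℤ → M → M)
    (x : M) : ℝ :=
  Real.log (Delta ω T 1 (T 1 x))

open Set

namespace ENNReal

lemma ofReal_neg_add_ofReal_le {x a b : ℝ} (ha : 0 ≤ a) (hb : 0 ≤ b) (h : a ≤ x + b) :
    ENNReal.ofReal (-x) + ENNReal.ofReal a ≤ ENNReal.ofReal x + ENNReal.ofReal b := by
  rcases le_total 0 x with hx | hx
  · rw [ofReal_of_nonpos (neg_nonpos.2 hx), zero_add, ← ofReal_add hx hb]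
    exact ofReal_le_ofReal h
  · rw [ofReal_of_nonpos hx, zero_add, ← ofReal_add (neg_nonneg.2 hx) ha]
    exact ofReal_le_ofReal (by linarith)

lemma mul_ofReal_neg_log_toReal_le_one {d : ℝ≥0∞} (hd : d ≠ ∞) :
    d * ENNReal.ofReal (-Real.log d.toReal) ≤ 1 := by
  obtain ⟨t, ht, rfl⟩ : ∃ t, 0 ≤ t ∧ ENNReal.ofReal t = d :=
    ⟨d.toReal, toReal_nonneg, ofReal_toReal hd⟩
  rw [toReal_ofReal ht, ← ofReal_mul ht, ← ofReal_one]
  have := Real.self_sub_one_le_mul_log ht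
  exact ofReal_le_ofReal (by linarith)

/-- `t log t ≥ t - 1`, split into the positive and negative parts of `log t`. -/
lemma mul_ofReal_neg_log_toReal_add_self_le {d : ℝ≥0∞} (hd : d ≠ ∞) :
    d * ENNReal.ofReal (-Real.log d.toReal) + d ≤ d * ENNReal.ofReal (Real.log d.toReal) + 1 := by
  obtain ⟨t, ht, rfl⟩ : ∃ t, 0 ≤ t ∧ ENNReal.ofReal t = d :=
    ⟨d.toReal, toReal_nonneg, ofReal_toReal hd⟩
  rw [toReal_ofReal ht, ← ofReal_mul ht, ← ofReal_mul ht, ← ofReal_one, mul_neg]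
  have := Real.self_sub_one_le_mul_log ht
  exact ofReal_neg_add_ofReal_le ht zero_le_one (by linarith)

lemma ofReal_log_toReal_le_self (d : ℝ≥0∞) : ENNReal.ofReal (Real.log d.toReal) ≤ d :=
  (ofReal_le_ofReal (Real.log_le_self toReal_nonneg)).trans ofReal_toReal_le

/-- `log t ≤ t - 1`, split into the positive and negative parts of `log t`. -/
lemma ofReal_log_toReal_add_one_le {d : ℝ≥0∞} (hd₀ : d ≠ 0) (hd : d ≠ ∞) :
    ENNReal.ofReal (Real.log d.toReal) + 1 ≤ ENNReal.ofReal (-Real.log d.toReal) + d := by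
  have ht := toReal_pos hd₀ hd
  have := Real.log_le_sub_one_of_pos ht
  simpa [ofReal_toReal hd] using
    ofReal_neg_add_ofReal_le (x := -Real.log d.toReal) zero_le_one ht.le (by linarith)

end ENNReal

namespace MeasureTheory

variable {α : Type*} [MeasurableSpace α] {μ ν : Measure α}

lemma lintegral_ofReal_llr_le_measure_univ :
    ∫⁻ x, ENNReal.ofReal (llr ν μ x) ∂μ ≤ ν univ :=
  (lintegral_mono fun _ ↦ ofReal_log_toReal_le_self _).trans Measure.lintegral_rnDeriv_le

variable [IsFiniteMeasure μ]

lemma llr_comp_ae_eq_neg_of_map_swap {f : α → α} (hf : MeasurableEmbedding f)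
    (hfμ : μ.map f = ν) (hfν : ν.map f = μ) (hμν : μ ≪ ν) :
    ∀ᵐ x ∂μ, llr ν μ (f x) = -llr ν μ x := by
  have : SigmaFinite ν := hfμ ▸ hf.sigmaFinite_map
  filter_upwards [hμν.ae_le (hf.rnDeriv_map μ ν), neg_llr hμν] with x hx hneg
  rw [hfμ, hfν] at hx
  rw [← hneg, Pi.neg_apply, neg_neg, llr, llr, hx]

variable [IsFiniteMeasure ν]

lemma lintegral_ofReal_neg_llr_le_measure_univ (hνμ : ν ≪ μ) :
    ∫⁻ x, ENNReal.ofReal (-llr ν μ x) ∂ν ≤ μ univ := by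
  rw [← lintegral_rnDeriv_mul hνμ (by fun_prop), ← lintegral_one]
  refine lintegral_mono_ae ?_
  filter_upwards [Measure.rnDeriv_ne_top ν μ] with x hx
  exact mul_ofReal_neg_log_toReal_le_one hx

/-- Gibbs' inequality `KL(ν ‖ μ) ≥ 0`, in a form that needs no integrability of `llr ν μ`. -/
lemma lintegral_ofReal_neg_llr_le_lintegral_ofReal_llr (hνμ : ν ≪ μ)
    (hmass : μ univ ≤ ν univ) :
    ∫⁻ x, ENNReal.ofReal (-llr ν μ x) ∂ν ≤ ∫⁻ x, ENNReal.ofReal (llr ν μ x) ∂ν := by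
  rw [← lintegral_rnDeriv_mul hνμ (by fun_prop), ← lintegral_rnDeriv_mul hνμ (by fun_prop)]
  have key : ∫⁻ x, (ν.rnDeriv μ x * ENNReal.ofReal (-llr ν μ x) + ν.rnDeriv μ x) ∂μ
      ≤ ∫⁻ x, (ν.rnDeriv μ x * ENNReal.ofReal (llr ν μ x) + 1) ∂μ := by
    refine lintegral_mono_ae ?_
    filter_upwards [Measure.rnDeriv_ne_top ν μ] with x hx
    exact mul_ofReal_neg_log_toReal_add_self_le hx
  rw [lintegral_add_right _ (Measure.measurable_rnDeriv ν μ),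
    lintegral_add_right _ measurable_const, Measure.lintegral_rnDeriv hνμ, lintegral_one] at key
  refine (ENNReal.add_le_add_iff_right (measure_ne_top μ univ)).1 ?_
  exact (add_le_add_right hmass _).trans key

lemma lintegral_ofReal_llr_le_lintegral_ofReal_neg_llr (hμν : μ ≪ ν)
    (hmass : ν univ ≤ μ univ) :
    ∫⁻ x, ENNReal.ofReal (llr ν μ x) ∂μ ≤ ∫⁻ x, ENNReal.ofReal (-llr ν μ x) ∂μ := by
  have key : ∫⁻ x, (ENNReal.ofReal (llr ν μ x) + 1) ∂μ
      ≤ ∫⁻ x, (ENNReal.ofReal (-llr ν μ x) + ν.rnDeriv μ x) ∂μ := by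
    refine lintegral_mono_ae ?_
    filter_upwards [Measure.rnDeriv_pos' hμν, Measure.rnDeriv_ne_top ν μ] with x hx₀ hx
    exact ofReal_log_toReal_add_one_le hx₀.ne' hx
  rw [lintegral_add_right _ measurable_const, lintegral_one,
    lintegral_add_right _ (Measure.measurable_rnDeriv ν μ)] at key
  refine (ENNReal.add_le_add_iff_right (measure_ne_top μ univ)).1 ?_
  exact key.trans (add_le_add_right (Measure.lintegral_rnDeriv_le.trans hmass) _)

end MeasureTheory

lemma apply_apply_of_add_eq_zero {α : Type*} {T : ℤ → α → α} (hT0 : T 0 = id)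
    (hTadd : ∀ n m : ℤ, T (n + m) = T n ∘ T m) {n m : ℤ} (h : n + m = 0) (x : α) :
    T n (T m x) = x := by
  rw [← Function.comp_apply (f := T n), ← hTadd, h, hT0, id]

section Flow

variable {M : Type*} [MeasurableSpace M] {ω : Measure M} {T : ℤ → M → M}

lemma measurableEmbedding_apply_one (hT0 : T 0 = id)
    (hTadd : ∀ n m : ℤ, T (n + m) = T n ∘ T m) (hTmeas : ∀ n : ℤ, Measurable (T n)) :
    MeasurableEmbedding (T 1) :=
  (MeasurableEquiv.mk
    ⟨T 1, T (-1), apply_apply_of_add_eq_zero hT0 hTadd (by norm_num),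
      apply_apply_of_add_eq_zero hT0 hTadd (by norm_num)⟩
    (hTmeas 1) (hTmeas (-1))).measurableEmbedding

lemma entProd_eq_llr (x : M) : entProd ω T x = llr (ω.map (T 1)) ω (T 1 x) := rfl

lemma lintegral_comp_entProd (hT1 : Measurable (T 1)) {g : ℝ → ℝ≥0∞} (hg : Measurable g) :
    ∫⁻ x, g (entProd ω T x) ∂ω = ∫⁻ y, g (llr (ω.map (T 1)) ω y) ∂(ω.map (T 1)) :=
  (lintegral_map (hg.comp (measurable_llr _ ω)) hT1).symm

lemma lintegral_comp_entProd_map_neg_one (hT0 : T 0 = id)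
    (hTadd : ∀ n m : ℤ, T (n + m) = T n ∘ T m) (hTmeas : ∀ n : ℤ, Measurable (T n))
    {g : ℝ → ℝ≥0∞} (hg : Measurable g) :
    ∫⁻ x, g (entProd ω T x) ∂(ω.map (T (-1))) = ∫⁻ y, g (llr (ω.map (T 1)) ω y) ∂ω := by
  rw [lintegral_map (f := fun x ↦ g (entProd ω T x))
    (hg.comp ((measurable_llr _ ω).comp (hTmeas 1))) (hTmeas (-1))]
  simp only [entProd_eq_llr,
    apply_apply_of_add_eq_zero hT0 hTadd (show (1 : ℤ) + -1 = 0 by norm_num)]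

/-- `φ ∘ θ` exchanges `ω` and `ω ∘ φ⁻¹`, hence inverts their Radon–Nikodym derivative. -/
lemma entProd_comp_ae_eq_neg [IsFiniteMeasure ω] (hT0 : T 0 = id)
    (hTadd : ∀ n m : ℤ, T (n + m) = T n ∘ T m) (hTmeas : ∀ n : ℤ, Measurable (T n))
    (hω : ω ≪ ω.map (T 1)) {θ : M → M} (hθ : Measurable θ) (hθθ : ∀ x, θ (θ x) = x)
    (hθT : θ ∘ T 1 = T (-1) ∘ θ) (hθω : ω.map θ = ω) :
    ∀ᵐ x ∂ω, entProd ω T (θ x) = -entProd ω T (T (-1) x) := by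
  have hT_one : ∀ x, T 1 (T (-1) x) = x := apply_apply_of_add_eq_zero hT0 hTadd (by norm_num)
  have hf : MeasurableEmbedding (T 1 ∘ θ) := (measurableEmbedding_apply_one hT0 hTadd hTmeas).comp
    (MeasurableEquiv.ofInvolutive θ hθθ hθ).measurableEmbedding
  have hfω : ω.map (T 1 ∘ θ) = ω.map (T 1) := by
    rw [← Measure.map_map (hTmeas 1) hθ, hθω]
  have hfν : (ω.map (T 1)).map (T 1 ∘ θ) = ω := by
    have : T 1 ∘ θ ∘ T 1 = θ := by rw [hθT]; exact funext fun x ↦ hT_one (θ x)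
    rw [Measure.map_map hf.measurable (hTmeas 1), Function.comp_assoc, this, hθω]
  filter_upwards [llr_comp_ae_eq_neg_of_map_swap hf hfω hfν hω] with x hx
  rw [entProd_eq_llr, entProd_eq_llr, hT_one]
  exact hx

end Flow

/-- Basic properties of the entropy production observable:
(1) `∫ σ dω` is well defined in `[0,∞]` (its negative part is `ω`-integrable) and is `≥ 0`;
(2) `∫ σ dω_{-1}` is well defined in `[-∞,0]` (its positive part is `ω_{-1}`-integrable) and
is `≤ 0`; (3) if `θ` is a time reversal then `σ ∘ θ = -σ ∘ φ^{-1}` ω-a.e. -/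
theorem entropy_production_basic
    {M : Type*} [MeasurableSpace M] (ω : Measure M) [IsProbabilityMeasure ω]
    (T : ℤ → M → M)
    (hT0 : T 0 = id)
    (hTadd : ∀ n m : ℤ, T (n + m) = T n ∘ T m)
    (hTmeas : ∀ n : ℤ, Measurable (T n))
    (hequiv : ∀ n : ℤ, ω.map (T n) ≪ ω ∧ ω ≪ ω.map (T n)) :
    ((∫⁻ x, ENNReal.ofReal (-(entProd ω T x)) ∂ω < ⊤) ∧
      ∫⁻ x, ENNReal.ofReal (-(entProd ω T x)) ∂ω ≤ ∫⁻ x, ENNReal.ofReal (entProd ω T x) ∂ω) ∧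
    ((∫⁻ x, ENNReal.ofReal (entProd ω T x) ∂(ω.map (T (-1))) < ⊤) ∧
      ∫⁻ x, ENNReal.ofReal (entProd ω T x) ∂(ω.map (T (-1)))
        ≤ ∫⁻ x, ENNReal.ofReal (-(entProd ω T x)) ∂(ω.map (T (-1)))) ∧
    (∀ θ : M → M, Measurable θ → (∀ x, θ (θ x) = x) →
      θ ∘ T 1 = T (-1) ∘ θ → ω.map θ = ω →
      ∀ᵐ x ∂ω, entProd ω T (θ x) = -(entProd ω T (T (-1) x))) := by
  set ν := ω.map (T 1)
  have : IsProbabilityMeasure ν := Measure.isProbabilityMeasure_map (hTmeas 1).aemeasurable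
  have hmass : ν univ = ω univ := by simp [ν, measure_univ]
  have hpos : Measurable ENNReal.ofReal := ENNReal.measurable_ofReal
  have hneg : Measurable fun r : ℝ ↦ ENNReal.ofReal (-r) := hpos.comp measurable_neg
  refine ⟨⟨?_, ?_⟩, ⟨?_, ?_⟩, fun θ hθ hθθ hθT hθω ↦
    entProd_comp_ae_eq_neg hT0 hTadd hTmeas (hequiv 1).2 hθ hθθ hθT hθω⟩
  · rw [lintegral_comp_entProd (hTmeas 1) hneg]
    exact (lintegral_ofReal_neg_llr_le_measure_univ (hequiv 1).1).trans_lt (measure_lt_top ω _)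
  · rw [lintegral_comp_entProd (hTmeas 1) hneg, lintegral_comp_entProd (hTmeas 1) hpos]
    exact lintegral_ofReal_neg_llr_le_lintegral_ofReal_llr (hequiv 1).1 hmass.ge
  · rw [lintegral_comp_entProd_map_neg_one hT0 hTadd hTmeas hpos]
    exact lintegral_ofReal_llr_le_measure_univ.trans_lt (measure_lt_top ν _)
  · rw [lintegral_comp_entProd_map_neg_one hT0 hTadd hTmeas hpos,
      lintegral_comp_entProd_map_neg_one hT0 hTadd hTmeas hneg]
    exact lintegral_ofReal_llr_le_lintegral_ofReal_neg_llr (hequiv 1).2 hmass.le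
end

section
/- Finite time generalized Evans–Searles identity: fix X ∈ ℝ^N, and suppose the entropy cocycle of (M, (φ^t), ω) satisfies c^t = ∫_0^t (X·Φ)(φ^s(x)) ds for ω-a.e. x and every t ∈ ℝ, and that there is a time reversal θ with Φ ∘ θ = −Φ ω-a.e. Then for every t > 0 and every bounded measurable f : ℝ^N → ℝ, ∫_M f(−Σ^t(x)) dω(x) = ∫_M e^{−t X·Σ^t(x)} f(Σ^t(x)) dω(x), where Σ^t(x) := (1/t)∫_0^t Φ(φ^s(x)) ds; equivalently, the law of −Σ^t under ω is equivalent to the law P^t of Σ^t and has density e^{−t X·s} with respect to P^t. -/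
/-!
Let `ϑ := θ ∘ φ^t`. Since `φ^s ∘ ϑ = θ ∘ φ^(t-s)`, oddness of `Φ` under `θ` gives
`Σ^t ∘ ϑ = -Σ^t`, so `∫ f(-Σ^t) dω = ∫ f(Σ^t) d(ϑ_*ω)`, and `ϑ_*ω = θ_*ω_t` has density
`Δ^t ∘ θ` with respect to `ω` because `ϑ` is an involution and `θ` preserves `ω`. Finally
`φ^t ∘ ϑ = θ`, so the cocycle hypothesis at `ϑ x` reads
`log Δ^t(θ x) = t X·Σ^t(ϑ x) = -t X·Σ^t(x)`.
-/

open MeasureTheory ENNReal intervalIntegral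

/-- The mean flux over `[0,t]`: `Σ^t(x) := (1/t)∫_0^t Φ(φ^s(x)) ds` (componentwise). -/
noncomputable def meanFlux {M : Type*} {N : ℕ} (T : ℝ → M → M) (Φ : M → Fin N → ℝ)
    (t : ℝ) (x : M) (i : Fin N) : ℝ :=
  (1 / t) * ∫ s in (0:ℝ)..t, Φ (T s x) i

section ChangeOfVariables

variable {M : Type*} [MeasurableSpace M]

lemma integral_comp_comp_involutive {ω : Measure M} [IsFiniteMeasure ω] {g θ : M → M}
    (hg : Measurable g) (hac : ω.map g ≪ ω) (hθm : Measurable θ) (hθθ : Function.Involutive θ)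
    (hθω : ω.map θ = ω) {F : M → ℝ} (hF : Measurable F) :
    ∫ x, F (θ (g x)) ∂ω = ∫ x, ((ω.map g).rnDeriv ω (θ x)).toReal * F x ∂ω :=
  calc ∫ x, F (θ (g x)) ∂ω = ∫ y, F (θ y) ∂(ω.map g) :=
        (integral_map hg.aemeasurable (hF.comp hθm).aestronglyMeasurable).symm
    _ = ∫ y, ((ω.map g).rnDeriv ω y).toReal * F (θ y) ∂ω := (integral_rnDeriv_smul hac).symm
    _ = ∫ y, ((ω.map g).rnDeriv ω y).toReal * F (θ y) ∂(ω.map θ) := by rw [hθω]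
    _ = ∫ x, ((ω.map g).rnDeriv ω (θ x)).toReal * F x ∂ω := by
        rw [integral_map (f := fun y => ((ω.map g).rnDeriv ω y).toReal * F (θ y)) hθm.aemeasurable
          ((Measure.measurable_rnDeriv _ _).ennreal_toReal.mul (hF.comp hθm)).aestronglyMeasurable]
        simp only [hθθ _]

end ChangeOfVariables

section Flow

variable {M : Type*} {N : ℕ} {T : ℝ → M → M} {θ : M → M}

lemma flow_apply_reversal (hTadd : ∀ s t : ℝ, T (s + t) = T s ∘ T t)
    (hθT : ∀ t : ℝ, θ ∘ T t = T (-t) ∘ θ) (s t : ℝ) (x : M) :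
    T s (θ (T t x)) = θ (T (t - s) x) := by
  have h₁ := congrFun (hθT t) x
  have h₂ := congrFun (hθT (t - s)) x
  have h₃ := congrFun (hTadd s (-t)) (θ x)
  simp only [Function.comp_apply] at h₁ h₂ h₃
  rw [h₁, h₂, ← h₃]
  congr 1
  ring

lemma meanFlux_reversal (hTadd : ∀ s t : ℝ, T (s + t) = T s ∘ T t)
    (hθT : ∀ t : ℝ, θ ∘ T t = T (-t) ∘ θ) {Φ : M → Fin N → ℝ} (t : ℝ) {x : M}
    (hx : ∀ᵐ s, Φ (θ (T s x)) = -Φ (T s x)) :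
    meanFlux T Φ t (θ (T t x)) = -meanFlux T Φ t x := by
  have hx' : ∀ᵐ s, Φ (θ (T (t - s) x)) = -Φ (T (t - s) x) :=
    (Measure.measurePreserving_sub_left volume t).quasiMeasurePreserving.ae hx
  funext i
  have hrev : (∫ s in (0:ℝ)..t, Φ (T s (θ (T t x))) i) = ∫ s in (0:ℝ)..t, -Φ (T (t - s) x) i :=
    intervalIntegral.integral_congr_ae <| hx'.mono fun _ hs _ => by
      rw [flow_apply_reversal hTadd hθT, hs, Pi.neg_apply]
  simp only [meanFlux, Pi.neg_apply, hrev, intervalIntegral.integral_neg,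
    intervalIntegral.integral_comp_sub_left (fun s => Φ (T s x) i), sub_self, sub_zero, mul_neg]

variable [MeasurableSpace M]

lemma measurable_meanFlux (hTjoint : Measurable fun p : ℝ × M => T p.1 p.2)
    {Φ : M → Fin N → ℝ} (hΦm : Measurable Φ) {t : ℝ} (ht : 0 ≤ t) :
    Measurable (meanFlux T Φ t) := by
  refine measurable_pi_lambda _ fun i => Measurable.const_mul ?_ _
  simp only [intervalIntegral.integral_of_le ht]
  exact (((measurable_pi_apply i).comp hΦm).comp (hTjoint.comp measurable_swap)
    ).stronglyMeasurable.integral_prod_right'.measurable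

lemma intervalIntegrable_flux (hTjoint : Measurable fun p : ℝ × M => T p.1 p.2)
    {Φ : M → Fin N → ℝ} (hΦm : Measurable Φ) {CΦ : ℝ} (hΦb : ∀ x, ‖Φ x‖ ≤ CΦ)
    (x : M) (i : Fin N) (a b : ℝ) : IntervalIntegrable (fun s => Φ (T s x) i) volume a b :=
  intervalIntegrable_const.mono_fun'
    (((measurable_pi_apply i).comp hΦm).comp
      (hTjoint.comp (measurable_id.prodMk measurable_const))).aestronglyMeasurable
    (ae_of_all _ fun _ => (norm_le_pi_norm _ i).trans (hΦb _))

lemma integral_dot_flux_eq_mul_dot_meanFlux (hTjoint : Measurable fun p : ℝ × M => T p.1 p.2)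
    {Φ : M → Fin N → ℝ} (hΦm : Measurable Φ) {CΦ : ℝ} (hΦb : ∀ x, ‖Φ x‖ ≤ CΦ)
    (X : Fin N → ℝ) {t : ℝ} (ht : t ≠ 0) (x : M) :
    ∫ s in (0:ℝ)..t, ∑ i, X i * Φ (T s x) i = t * ∑ i, X i * meanFlux T Φ t x i := by
  rw [intervalIntegral.integral_finsetSum
    fun i _ => (intervalIntegrable_flux hTjoint hΦm hΦb x i 0 t).const_mul (X i), Finset.mul_sum]
  refine Finset.sum_congr rfl fun i _ => ?_
  rw [intervalIntegral.integral_const_mul, meanFlux]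
  field_simp

lemma ae_ae_flow_of_ae {ω : Measure M} [SFinite ω]
    (hTjoint : Measurable fun p : ℝ × M => T p.1 p.2)
    (hT : ∀ s, Measure.QuasiMeasurePreserving (T s) ω ω) {P : M → Prop}
    (hP : MeasurableSet {y | P y}) (h : ∀ᵐ y ∂ω, P y) :
    ∀ᵐ x ∂ω, ∀ᵐ s, P (T s x) :=
  (Measure.ae_ae_comm (p := fun x s => P (T s x))
    (hP.preimage (hTjoint.comp measurable_swap))).2 (ae_of_all _ fun s => (hT s).ae h)

end Flow

/-- Finite time generalized Evans–Searles identity: if the entropy cocycle of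
`(M,(φ^t),ω)` is `c^t = ∫_0^t (X·Φ)∘φ^s ds` and there is a time reversal `θ` with
`Φ∘θ = -Φ` a.e., then the law of `-Σ^t` has density `e^{-tX·s}` with respect to the law
of `Σ^t`; equivalently, for every bounded measurable `f`,
`∫ f(-Σ^t) dω = ∫ e^{-tX·Σ^t} f(Σ^t) dω`. -/
theorem finite_time_generalized_evans_searles
    {M : Type*} [MeasurableSpace M] (ω : Measure M) [IsProbabilityMeasure ω]
    (T : ℝ → M → M)
    (hT0 : T 0 = id)
    (hTadd : ∀ s t : ℝ, T (s + t) = T s ∘ T t)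
    (hTm : ∀ t : ℝ, Measurable (T t))
    (hTjoint : Measurable fun p : ℝ × M => T p.1 p.2)
    (hequiv : ∀ t : ℝ, ω.map (T t) ≪ ω ∧ ω ≪ ω.map (T t))
    {N : ℕ} (X : Fin N → ℝ)
    (Φ : M → Fin N → ℝ) (hΦm : Measurable Φ) (CΦ : ℝ) (hΦb : ∀ x, ‖Φ x‖ ≤ CΦ)
    (hcoc : ∀ t : ℝ, ∀ᵐ x ∂ω,
      Real.log (((ω.map (T t)).rnDeriv ω (T t x)).toReal)
        = ∫ s in (0:ℝ)..t, ∑ i, X i * Φ (T s x) i)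
    (θ : M → M) (hθm : Measurable θ) (hθinv : ∀ x, θ (θ x) = x)
    (hθT : ∀ t : ℝ, θ ∘ T t = T (-t) ∘ θ) (hθω : ω.map θ = ω)
    (hΦθ : ∀ᵐ x ∂ω, Φ (θ x) = -Φ x) :
    ∀ t : ℝ, 0 < t →
      ∀ f : (Fin N → ℝ) → ℝ, Measurable f → ∀ C : ℝ, (∀ v, |f v| ≤ C) →
        ∫ x, f (fun i => -(meanFlux T Φ t x i)) ∂ω
          = ∫ x, Real.exp (-(t * ∑ i, X i * meanFlux T Φ t x i))
              * f (fun i => meanFlux T Φ t x i) ∂ω := by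
  intro t ht f hf C _
  have hqmp : ∀ s, Measure.QuasiMeasurePreserving (T s) ω ω := fun s => ⟨hTm s, (hequiv s).1⟩
  have hθqmp : Measure.QuasiMeasurePreserving θ ω ω := ⟨hθm, by rw [hθω]⟩
  have hrev : ∀ᵐ x ∂ω, meanFlux T Φ t (θ (T t x)) = -meanFlux T Φ t x :=
    (ae_ae_flow_of_ae hTjoint hqmp (measurableSet_eq_fun (hΦm.comp hθm) hΦm.neg) hΦθ).mono
      fun x hx => meanFlux_reversal hTadd hθT t hx
  have hdens : ∀ᵐ x ∂ω, ((ω.map (T t)).rnDeriv ω (θ x)).toReal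
      = Real.exp (-(t * ∑ i, X i * meanFlux T Φ t x i)) := by
    filter_upwards [hθqmp.ae (exp_llr_of_ac' _ _ (hequiv t).2),
      (hθqmp.comp (hqmp t)).ae (hcoc t), hrev] with x hexp hcocx hx
    have hreturn : T t (θ (T t x)) = θ x := by
      rw [flow_apply_reversal hTadd hθT, sub_self, hT0, id]
    rw [Function.comp_apply, hreturn,
      integral_dot_flux_eq_mul_dot_meanFlux hTjoint hΦm hΦb X ht.ne', hx] at hcocx
    rw [← hexp, llr, hcocx]
    simp only [Pi.neg_apply, mul_neg, Finset.sum_neg_distrib]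
  calc ∫ x, f (fun i => -meanFlux T Φ t x i) ∂ω = ∫ x, f (meanFlux T Φ t (θ (T t x))) ∂ω :=
        integral_congr_ae (hrev.mono fun x hx => by dsimp only; rw [hx]; rfl)
    _ = ∫ x, ((ω.map (T t)).rnDeriv ω (θ x)).toReal * f (meanFlux T Φ t x) ∂ω :=
        integral_comp_comp_involutive (hTm t) (hequiv t).1 hθm hθinv hθω
          (hf.comp (measurable_meanFlux hTjoint hΦm ht.le))
    _ = _ := integral_congr_ae (hdens.mono fun x hx => by dsimp only; rw [hx])
end

section
/- Regular sequence lemma: let (t_n) be a sequence of positive real numbers with t_n ↑ ∞ such that Σ_n e^{−a t_n} < ∞ for every a > 0 (a regular sequence). Then for ω-a.e. x ∈ M: liminf_{n→∞} (1/t_n) c^{t_n}(x) ≥ 0 and limsup_{n→∞} (−1/t_n) c^{−t_n}(x) ≤ 0. -/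
open MeasureTheory ENNReal Filter

/-- The entropy cocycle `c^t := (log Δ^t) ∘ φ^t` where `Δ^t := d(ω∘φ^{-t})/dω` and
`T t` is the flow `φ^t`. -/
noncomputable def ecocC {M : Type*} [MeasurableSpace M] (ω : Measure M) (T : ℝ → M → M)
    (t : ℝ) (x : M) : ℝ :=
  Real.log (((ω.map (T t)).rnDeriv ω (T t x)).toReal)

/-!
Since `ω ∘ φ^{-s}` has density `Δ^s` with respect to `ω`, Markov's inequality gives
`ω {c^s ≤ -r} ≤ (ω ∘ φ^{-s}) {Δ^s ≤ e^{-r}} ≤ e^{-r}` for every time `s`. Taking `r = a t_n`,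
regularity of `(t_n)` makes these bounds summable, so by Borel–Cantelli a.e. `c^{±t_n} > -a t_n`
for all large `n`; letting `a ↓ 0` along a countable sequence gives `liminf c^{±t_n}/t_n ≥ 0`,
and the bound on `-c^{-t_n}/t_n` is the same statement after negation.
-/

lemma MeasureTheory.Measure.measure_setOf_rnDeriv_le_le {α : Type*} [MeasurableSpace α]
    {μ ν : Measure α} [μ.HaveLebesgueDecomposition ν] (hμν : μ ≪ ν) (c : ℝ≥0∞) :
    μ {y | μ.rnDeriv ν y ≤ c} ≤ c * ν Set.univ := by
  have hs : MeasurableSet {y | μ.rnDeriv ν y ≤ c} :=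
    measurableSet_le (Measure.measurable_rnDeriv μ ν) measurable_const
  calc μ {y | μ.rnDeriv ν y ≤ c}
      = ∫⁻ y in {y | μ.rnDeriv ν y ≤ c}, μ.rnDeriv ν y ∂ν :=
        (Measure.setLIntegral_rnDeriv' hμν hs).symm
    _ ≤ ∫⁻ _ in {y | μ.rnDeriv ν y ≤ c}, c ∂ν := setLIntegral_mono' hs fun _ hy => hy
    _ = c * ν {y | μ.rnDeriv ν y ≤ c} := setLIntegral_const _ c
    _ ≤ c * ν Set.univ := by gcongr; exact Set.subset_univ _

lemma ENNReal.le_ofReal_exp_of_log_toReal_le {y : ℝ≥0∞} {r : ℝ} (hr : 0 < r)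
    (h : Real.log y.toReal ≤ -r) : y ≤ ENNReal.ofReal (Real.exp (-r)) := by
  -- `log 0 = 0`, so the hypothesis rules out both `y = 0` and `y = ∞`.
  have hpos : 0 < y.toReal := by
    by_contra! hy
    rw [le_antisymm hy ENNReal.toReal_nonneg, Real.log_zero] at h
    linarith
  rw [← ENNReal.ofReal_toReal (ENNReal.toReal_pos_iff.1 hpos).2.ne]
  exact ENNReal.ofReal_le_ofReal ((Real.log_le_iff_le_exp hpos).1 h)

lemma zero_le_liminf_coe_of_eventually_neg_lt {ι : Type*} {l : Filter ι} {f : ι → ℝ}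
    (h : ∀ ε > 0, ∀ᶠ i in l, -ε < f i) : 0 ≤ l.liminf fun i => (f i : EReal) := by
  rw [le_liminf_iff]
  intro y hy
  obtain ⟨z, hyz, hz⟩ := EReal.lt_iff_exists_real_btwn.1 hy
  filter_upwards [h (-z) (by linarith [EReal.coe_lt_coe_iff.1 hz])] with i hi
  exact hyz.trans (EReal.coe_lt_coe_iff.2 (by linarith))

section Cocycle

variable {M : Type*} [MeasurableSpace M] {ω : Measure M} [IsProbabilityMeasure ω]
  {T : ℝ → M → M}

lemma measure_ecocC_le_neg_le (hTm : ∀ t : ℝ, Measurable (T t))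
    (hac : ∀ t : ℝ, ω.map (T t) ≪ ω) (s : ℝ) {r : ℝ} (hr : 0 < r) :
    ω {x | ecocC ω T s x ≤ -r} ≤ ENNReal.ofReal (Real.exp (-r)) := by
  set D := (ω.map (T s)).rnDeriv ω
  have hsub : {x | ecocC ω T s x ≤ -r} ⊆ T s ⁻¹' {y | D y ≤ ENNReal.ofReal (Real.exp (-r))} :=
    fun x hx => ENNReal.le_ofReal_exp_of_log_toReal_le hr hx
  calc ω {x | ecocC ω T s x ≤ -r}
      ≤ ω.map (T s) {y | D y ≤ ENNReal.ofReal (Real.exp (-r))} := by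
        rw [Measure.map_apply (hTm s)
          (measurableSet_le (Measure.measurable_rnDeriv _ _) measurable_const)]
        exact measure_mono hsub
    _ ≤ ENNReal.ofReal (Real.exp (-r)) * ω Set.univ :=
        Measure.measure_setOf_rnDeriv_le_le (hac s) _
    _ = ENNReal.ofReal (Real.exp (-r)) := by rw [measure_univ, mul_one]

lemma ae_eventually_neg_lt_ecocC (hTm : ∀ t : ℝ, Measurable (T t))
    (hac : ∀ t : ℝ, ω.map (T t) ≪ ω) (u r : ℕ → ℝ) (hr : ∀ n, 0 < r n)
    (hsum : Summable fun n => Real.exp (-r n)) :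
    ∀ᵐ x ∂ω, ∀ᶠ n in atTop, -r n < ecocC ω T (u n) x := by
  have hfinite : ∑' n, ω {x | ecocC ω T (u n) x ≤ -r n} ≠ ∞ := by
    refine ne_top_of_le_ne_top ?_
      (ENNReal.tsum_le_tsum fun n => measure_ecocC_le_neg_le hTm hac (u n) (hr n))
    rw [← ENNReal.ofReal_tsum_of_nonneg (fun n => (Real.exp_pos _).le) hsum]
    exact ENNReal.ofReal_ne_top
  filter_upwards [ae_eventually_notMem hfinite] with x hx
  simpa only [Set.mem_ofPred_eq, not_le] using hx

lemma ae_zero_le_liminf_ecocC_div (hTm : ∀ t : ℝ, Measurable (T t))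
    (hac : ∀ t : ℝ, ω.map (T t) ≪ ω) {t : ℕ → ℝ} (htpos : ∀ n, 0 < t n)
    (htreg : ∀ a : ℝ, 0 < a → Summable fun n => Real.exp (-a * t n)) (u : ℕ → ℝ) :
    ∀ᵐ x ∂ω, 0 ≤ atTop.liminf fun n => ((ecocC ω T (u n) x / t n : ℝ) : EReal) := by
  have hrate : ∀ᵐ x ∂ω, ∀ k : ℕ,
      ∀ᶠ n in atTop, -(1 / (k + 1 : ℝ) * t n) < ecocC ω T (u n) x := by
    refine ae_all_iff.2 fun k => ae_eventually_neg_lt_ecocC hTm hac u _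
      (fun n => by have := htpos n; positivity) ?_
    simpa only [neg_mul] using htreg _ (by positivity)
  filter_upwards [hrate] with x hx
  refine zero_le_liminf_coe_of_eventually_neg_lt fun ε hε => ?_
  obtain ⟨k, hk⟩ := exists_nat_one_div_lt hε
  filter_upwards [hx k] with n hn
  rw [lt_div_iff₀ (htpos n)]
  nlinarith [htpos n]

end Cocycle

theorem regular_sequence_entropy_bounds_general
    {M : Type*} [MeasurableSpace M] (ω : Measure M) [IsProbabilityMeasure ω]
    (T : ℝ → M → M)
    (hTm : ∀ t : ℝ, Measurable (T t))
    (hequiv : ∀ t : ℝ, ω.map (T t) ≪ ω ∧ ω ≪ ω.map (T t))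
    (t : ℕ → ℝ) (htpos : ∀ n, 0 < t n)
    (htreg : ∀ a : ℝ, 0 < a → Summable fun n => Real.exp (-a * t n)) :
    ∀ᵐ x ∂ω,
      (0 ≤ atTop.liminf fun n : ℕ => ((ecocC ω T (t n) x / t n : ℝ) : EReal)) ∧
      (atTop.limsup (fun n : ℕ => ((-(ecocC ω T (-(t n)) x) / t n : ℝ) : EReal)) ≤ 0) := by
  have hac : ∀ s : ℝ, ω.map (T s) ≪ ω := fun s => (hequiv s).1
  filter_upwards [ae_zero_le_liminf_ecocC_div hTm hac htpos htreg t,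
    ae_zero_le_liminf_ecocC_div hTm hac htpos htreg fun n => -(t n)] with x hforward hbackward
  refine ⟨hforward, ?_⟩
  have hneg : (fun n : ℕ => ((-(ecocC ω T (-(t n)) x) / t n : ℝ) : EReal)) =
      -fun n : ℕ => ((ecocC ω T (-(t n)) x / t n : ℝ) : EReal) := by
    ext n
    simp only [neg_div, EReal.coe_neg, Pi.neg_apply]
  rw [hneg, EReal.limsup_neg]
  exact EReal.neg_le_zero.2 hbackward

/-- Regular sequence lemma: if `(t_n)` is a regular sequence (positive, increasing to `∞`,
with `Σ_n e^{-a t_n} < ∞` for all `a > 0`), then for ω-a.e. `x`,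
`liminf (1/t_n) c^{t_n}(x) ≥ 0` and `limsup (-1/t_n) c^{-t_n}(x) ≤ 0`
(the lim inf/lim sup being taken in the extended reals). -/
theorem regular_sequence_entropy_bounds
    {M : Type*} [MeasurableSpace M] (ω : Measure M) [IsProbabilityMeasure ω]
    (T : ℝ → M → M)
    (hT0 : T 0 = id)
    (hTadd : ∀ s t : ℝ, T (s + t) = T s ∘ T t)
    (hTm : ∀ t : ℝ, Measurable (T t))
    (hTjoint : Measurable fun p : ℝ × M => T p.1 p.2)
    (hequiv : ∀ t : ℝ, ω.map (T t) ≪ ω ∧ ω ≪ ω.map (T t))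
    (t : ℕ → ℝ) (htpos : ∀ n, 0 < t n) (htmono : StrictMono t)
    (htinf : Tendsto t atTop atTop)
    (htreg : ∀ a : ℝ, 0 < a → Summable fun n => Real.exp (-a * t n)) :
    ∀ᵐ x ∂ω,
      (0 ≤ atTop.liminf fun n : ℕ => ((ecocC ω T (t n) x / t n : ℝ) : EReal)) ∧
      (atTop.limsup (fun n : ℕ => ((-(ecocC ω T (-(t n)) x) / t n : ℝ) : EReal)) ≤ 0) :=
  regular_sequence_entropy_bounds_general ω T hTm hequiv t htpos htreg
end

section
/- Suppose ω is invariant under the flow (ω ∘ φ^{−t} = ω for all t ∈ ℝ), let Φ, Ψ : M → ℝ be bounded measurable, and set C(s) := ∫_M Ψ·(Φ ∘ φ^s) dω. Assume sup_{|s|≥1} |s·C(s)| < ∞ (i.e. C(s) = O(|s|^{−1}) as |s| → ∞). Then for any L ∈ ℝ the following are equivalent: (1) lim_{t→∞} (1/2)∫_{−t}^{t} C(s) ds = L; (2) lim_{t→∞} (1/2)∫_{−t}^{t} C(s)(1 − |s|/t) ds = L. -/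
open MeasureTheory Filter intervalIntegral

/-- The equilibrium flux–flux correlation function `C(s) := ∫ Ψ·(Φ∘φ^s) dω`. -/
noncomputable def corrFun {M : Type*} [MeasurableSpace M] (ω : Measure M) (T : ℝ → M → M)
    (Φ Ψ : M → ℝ) (s : ℝ) : ℝ :=
  ∫ x, Ψ x * Φ (T s x) ∂ω

/-!
Folding `[-t, t]` onto `[0, t]` replaces `C` by its even part `e`, and integrating by parts
turns the Fejér-weighted integral `∫₀ᵗ e(s) (1 - s/t) ds` into the Cesàro mean `(1/t) ∫₀ᵗ G` of the
primitive `G(u) = ∫₀ᵘ e`. Cesàro means of a convergent function converge to the same limit.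
Conversely, `|s e(s)| ≤ K` makes `G` slowly oscillating, `|G u - G t| ≤ K log (u/t)`, and for such
`G` convergence of the Cesàro means forces convergence of `G` (Hardy's Tauberian argument: `G t`
stays within `K log λ` of its mean over `[t, λt]`, and these means converge to the Cesàro limit).
-/

open Asymptotics Real

theorem MeasureTheory.LocallyIntegrable.intervalIntegrable {E : Type*} [NormedAddCommGroup E]
    {μ : Measure ℝ} {f : ℝ → E} (hf : LocallyIntegrable f μ) (a b : ℝ) :
    IntervalIntegrable f μ a b :=
  (hf.integrableOn_isCompact isCompact_uIcc).intervalIntegrable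

theorem MeasureTheory.LocallyIntegrable.add_comp_neg_div_two {f : ℝ → ℝ}
    (hf : LocallyIntegrable f volume) : LocallyIntegrable (fun s => (f s + f (-s)) / 2) volume := by
  have hneg : LocallyIntegrable (fun s => f (-s)) volume :=
    (locallyIntegrable_map_homeomorph (Homeomorph.neg ℝ)).1
      (by rwa [Homeomorph.coe_neg, Measure.map_neg_eq_self])
  refine ((hf.add hneg).smul (2⁻¹ : ℝ)).congr (ae_of_all _ fun s => ?_)
  simp only [Pi.smul_apply, Pi.add_apply, smul_eq_mul]
  ring

theorem integral_neg_self_eq_integral_add_comp_neg {f : ℝ → ℝ} {u : ℝ}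
    (hf : IntervalIntegrable f volume (-u) u) :
    ∫ s in (-u)..u, f s = ∫ s in 0..u, (f s + f (-s)) := by
  have hzero : (0 : ℝ) ∈ Set.uIcc (-u) u := by
    rcases le_total 0 u with h | h <;> simp [h]
  have hneg : IntervalIntegrable f volume (-u) 0 :=
    hf.mono_set (Set.uIcc_subset_uIcc Set.left_mem_uIcc hzero)
  have hpos : IntervalIntegrable f volume 0 u :=
    hf.mono_set (Set.uIcc_subset_uIcc hzero Set.right_mem_uIcc)
  have hneg' : IntervalIntegrable (fun s => f (-s)) volume 0 u := by
    simpa using ((IntervalIntegrable.iff_comp_neg (f := f)).1 hneg).symm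
  rw [← integral_add_adjacent_intervals hneg hpos, integral_add hpos hneg', add_comm]
  simp [integral_comp_neg]

theorem half_mul_integral_neg_self_eq {f : ℝ → ℝ} {u : ℝ}
    (hf : IntervalIntegrable f volume (-u) u) :
    1 / 2 * ∫ s in (-u)..u, f s = ∫ s in 0..u, (f s + f (-s)) / 2 := by
  rw [integral_neg_self_eq_integral_add_comp_neg hf, intervalIntegral.integral_div]
  ring

theorem integral_integral_eq_integral_mul_sub {e : ℝ → ℝ} {t : ℝ}
    (he : IntervalIntegrable e volume 0 t) :
    ∫ u in 0..t, ∫ s in 0..u, e s = ∫ s in 0..t, e s * (t - s) := by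
  have hG := he.absolutelyContinuousOnInterval_intervalIntegral (c := 0) Set.left_mem_uIcc
  have hg : AbsolutelyContinuousOnInterval (fun u : ℝ => u - t) 0 t :=
    (contDiff_id.sub contDiff_const).contDiffOn.absolutelyContinuousOnInterval
  have hderiv : ∀ᵐ u, u ∈ Set.uIoc 0 t → deriv (fun u => ∫ s in 0..u, e s) u = e u := by
    filter_upwards [he.ae_hasDerivAt_integral] with u hu hmem
    exact (hu (Set.uIoc_subset_uIcc hmem) 0 Set.left_mem_uIcc).deriv
  -- integration by parts against `u - t`, which vanishes at `u = t`
  have hibp := hG.integral_mul_deriv_eq_deriv_mul hg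
  simp only [deriv_sub_const, deriv_id'', mul_one, sub_self, mul_zero, integral_same, zero_mul,
    zero_sub] at hibp
  rw [hibp, integral_congr_ae (hderiv.mono fun u hu hmem => by rw [hu hmem]),
    ← intervalIntegral.integral_neg]
  congr 1 with s
  ring

theorem integral_mul_one_sub_div_eq {e : ℝ → ℝ} {t : ℝ} (he : IntervalIntegrable e volume 0 t) :
    ∫ s in 0..t, e s * (1 - s / t) = (∫ u in 0..t, ∫ s in 0..u, e s) / t := by
  rcases eq_or_ne t 0 with rfl | ht
  · simp
  rw [integral_integral_eq_integral_mul_sub he, ← intervalIntegral.integral_div]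
  congr 1 with s
  field_simp

theorem isLittleO_integral_of_tendsto_zero {g : ℝ → ℝ} (hg : LocallyIntegrable g volume)
    (h : Tendsto g atTop (nhds 0)) : (fun t => ∫ u in 0..t, g u) =o[atTop] id := by
  refine isLittleO_iff.2 fun ε hε => ?_
  obtain ⟨T, hT⟩ := eventually_atTop.1 ((eventually_ge_atTop 0).and
    ((NormedAddGroup.tendsto_nhds_zero.1 h) (ε / 2) (half_pos hε)))
  filter_upwards [eventually_ge_atTop T,
    eventually_ge_atTop (2 * ‖∫ u in 0..T, g u‖ / ε)] with t hTt htA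
  have hT0 : 0 ≤ T := (hT T le_rfl).1
  have htail : ‖∫ u in T..t, g u‖ ≤ ε / 2 * (t - T) := by
    refine (intervalIntegral.norm_integral_le_of_norm_le_const fun u hu => ?_).trans_eq
      (by rw [abs_of_nonneg (sub_nonneg.2 hTt)])
    exact (hT u (Set.uIoc_of_le hTt ▸ hu).1.le).2.le
  have hhead : ‖∫ u in 0..T, g u‖ ≤ ε / 2 * t := by
    rw [div_le_iff₀ hε] at htA; linarith
  rw [id, Real.norm_of_nonneg (hT0.trans hTt),
    ← integral_add_adjacent_intervals (hg.intervalIntegrable 0 T) (hg.intervalIntegrable T t)]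
  calc ‖(∫ u in 0..T, g u) + ∫ u in T..t, g u‖ ≤ ε / 2 * t + ε / 2 * (t - T) :=
        (norm_add_le _ _).trans (add_le_add hhead htail)
    _ ≤ ε * t := by nlinarith

theorem Filter.Tendsto.cesaro_integral {f : ℝ → ℝ} (hf : LocallyIntegrable f volume) {L : ℝ}
    (h : Tendsto f atTop (nhds L)) : Tendsto (fun t => (∫ u in 0..t, f u) / t) atTop (nhds L) := by
  have hsub := (isLittleO_integral_of_tendsto_zero (g := fun u => f u - L)
    (hf.sub (locallyIntegrable_const L)) (by simpa using h.sub_const L)).tendsto_div_nhds_zero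
  refine ((hsub.add_const L).congr' ?_).trans (by simp)
  filter_upwards [eventually_ne_atTop 0] with t ht
  rw [integral_sub (hf.intervalIntegrable 0 t) intervalIntegrable_const]
  simp only [intervalIntegral.integral_const, sub_zero, smul_eq_mul, id_eq]
  field_simp
  ring

theorem abs_integral_div_sub_le {F : ℝ → ℝ} {a b c δ : ℝ} (hab : a ≠ b)
    (hF : IntervalIntegrable F volume a b) (h : ∀ u ∈ Set.uIoc a b, |F u - c| ≤ δ) :
    |(∫ u in a..b, F u) / (b - a) - c| ≤ δ := by
  have hba : b - a ≠ 0 := sub_ne_zero.2 hab.symm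
  have hsub : (∫ u in a..b, F u) / (b - a) - c = (∫ u in a..b, (F u - c)) / (b - a) := by
    rw [integral_sub hF intervalIntegrable_const, intervalIntegral.integral_const, smul_eq_mul]
    field_simp
  rw [hsub, abs_div, div_le_iff₀ (abs_pos.2 hba)]
  exact intervalIntegral.norm_integral_le_of_norm_le_const (f := fun u => F u - c) h

theorem tendsto_integral_div_mul_sub {F : ℝ → ℝ} (hF : LocallyIntegrable F volume) {L : ℝ}
    (h : Tendsto (fun t => (∫ u in 0..t, F u) / t) atTop (nhds L)) {q : ℝ} (hq : 1 < q) :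
    Tendsto (fun t => (∫ u in t..q * t, F u) / (q * t - t)) atTop (nhds L) := by
  have hq1 : q - 1 ≠ 0 := sub_ne_zero.2 hq.ne'
  have hqt := h.comp (tendsto_id.const_mul_atTop (zero_lt_one.trans hq))
  -- with `A t = (∫₀ᵗ F) / t`, the mean of `F` over `[t, q t]` is `(q A (q t) - A t) / (q - 1)`
  have hlim := ((hqt.const_mul q).sub h).div_const (q - 1)
  rw [show (q * L - L) / (q - 1) = L by field_simp] at hlim
  refine hlim.congr' ?_
  filter_upwards [eventually_gt_atTop 0] with t ht
  rw [Function.comp_apply, id, ← integral_interval_sub_left (hF.intervalIntegrable 0 (q * t))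
    (hF.intervalIntegrable 0 t)]
  field_simp

theorem tendsto_of_tendsto_integral_div_of_abs_sub_le_mul_log {F : ℝ → ℝ}
    (hF : LocallyIntegrable F volume) {K : ℝ}
    (hosc : ∀ t u, 1 ≤ t → t ≤ u → |F u - F t| ≤ K * log (u / t)) {L : ℝ}
    (h : Tendsto (fun t => (∫ u in 0..t, F u) / t) atTop (nhds L)) :
    Tendsto F atTop (nhds L) := by
  refine Metric.tendsto_nhds.2 fun ε hε => ?_
  set δ := ε / (2 * (|K| + 1))
  have hδ : 0 < δ := by positivity
  have hKδ : |K| * δ < ε / 2 := by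
    have : (|K| + 1) * δ = ε / 2 := by simp only [δ]; field_simp
    nlinarith
  filter_upwards [Metric.tendsto_nhds.1 (tendsto_integral_div_mul_sub hF h (one_lt_exp_iff.2 hδ))
    (ε / 2) (half_pos hε), eventually_ge_atTop 1] with t hB ht
  have ht0 : 0 < t := zero_lt_one.trans_le ht
  have hlt : t < exp δ * t := lt_mul_left ht0 (one_lt_exp_iff.2 hδ)
  have hclose : |(∫ u in t..exp δ * t, F u) / (exp δ * t - t) - F t| ≤ |K| * δ := by
    refine abs_integral_div_sub_le hlt.ne (hF.intervalIntegrable _ _) fun u hu => ?_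
    rw [Set.uIoc_of_le hlt.le] at hu
    have hlog : log (u / t) ≤ δ := by
      rw [log_le_iff_le_exp (div_pos (ht0.trans hu.1) ht0), div_le_iff₀ ht0]
      exact hu.2
    calc |F u - F t| ≤ K * log (u / t) := hosc t u ht hu.1.le
      _ ≤ |K| * log (u / t) :=
        mul_le_mul_of_nonneg_right (le_abs_self K) (log_nonneg ((one_le_div ht0).2 hu.1.le))
      _ ≤ |K| * δ := mul_le_mul_of_nonneg_left hlog (abs_nonneg K)
  rw [Real.dist_eq] at hB ⊢
  rw [abs_sub_comm] at hclose
  calc |F t - L| ≤ |F t - (∫ u in t..exp δ * t, F u) / (exp δ * t - t)|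
        + |(∫ u in t..exp δ * t, F u) / (exp δ * t - t) - L| := abs_sub_le _ _ _
    _ < ε := by linarith

theorem abs_integral_sub_integral_le_mul_log {e : ℝ → ℝ} (he : LocallyIntegrable e volume)
    {K : ℝ} (hK : ∀ s, 1 ≤ s → |s * e s| ≤ K) {t u : ℝ} (ht : 1 ≤ t) (htu : t ≤ u) :
    |(∫ s in 0..u, e s) - ∫ s in 0..t, e s| ≤ K * log (u / t) := by
  have ht0 : 0 < t := zero_lt_one.trans_le ht
  have hinv : IntervalIntegrable (fun s => K * s⁻¹) volume t u := by
    refine (intervalIntegral.intervalIntegrable_inv (fun s hs => ?_) continuousOn_id).const_mul K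
    rw [Set.uIcc_of_le htu] at hs
    exact (ht0.trans_le hs.1).ne'
  rw [integral_interval_sub_left (he.intervalIntegrable 0 u) (he.intervalIntegrable 0 t)]
  calc |∫ s in t..u, e s| ≤ ∫ s in t..u, |e s| := abs_integral_le_integral_abs htu
    _ ≤ ∫ s in t..u, K * s⁻¹ := integral_mono_on htu (he.intervalIntegrable t u).abs hinv
        fun s hs => ?_
    _ = K * log (u / t) := by
      rw [intervalIntegral.integral_const_mul, integral_inv_of_pos ht0 (ht0.trans_le htu)]
  · have hs0 : 0 < s := ht0.trans_le hs.1
    rw [← div_eq_mul_inv, le_div_iff₀ hs0, mul_comm]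
    simpa [abs_mul, abs_of_pos hs0] using hK s (ht.trans hs.1)

theorem abs_mul_add_comp_neg_div_two_le {c : ℝ → ℝ} {K : ℝ}
    (hK : ∀ s, 1 ≤ |s| → |s * c s| ≤ K) {s : ℝ} (hs : 1 ≤ s) : |s * ((c s + c (-s)) / 2)| ≤ K := by
  have hpos := hK s (hs.trans (le_abs_self s))
  have hneg := hK (-s) (by rwa [abs_neg, abs_of_nonneg (zero_le_one.trans hs)])
  calc |s * ((c s + c (-s)) / 2)| = |s * c s - -s * c (-s)| / 2 := by
        rw [show s * ((c s + c (-s)) / 2) = (s * c s - -s * c (-s)) / 2 by ring, abs_div, abs_two]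
    _ ≤ (|s * c s| + |-s * c (-s)|) / 2 := by gcongr; exact abs_sub _ _
    _ ≤ K := by linarith

theorem tendsto_integral_iff_tendsto_integral_mul_one_sub_div {e : ℝ → ℝ}
    (he : LocallyIntegrable e volume) {K : ℝ} (hK : ∀ s, 1 ≤ s → |s * e s| ≤ K) {L : ℝ} :
    Tendsto (fun t => ∫ s in 0..t, e s) atTop (nhds L) ↔
      Tendsto (fun t => ∫ s in 0..t, e s * (1 - s / t)) atTop (nhds L) := by
  have hF : Continuous fun u => ∫ s in 0..u, e s := continuous_primitive he.intervalIntegrable 0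
  simp_rw [integral_mul_one_sub_div_eq (he.intervalIntegrable 0 _)]
  exact ⟨fun h => h.cesaro_integral hF.locallyIntegrable,
    tendsto_of_tendsto_integral_div_of_abs_sub_le_mul_log hF.locallyIntegrable
      fun t u ht htu => abs_integral_sub_integral_le_mul_log he hK ht htu⟩

theorem measurable_corrFun {M : Type*} [MeasurableSpace M] (ω : Measure M) [SFinite ω]
    {T : ℝ → M → M} (hT : Measurable fun p : ℝ × M => T p.1 p.2) {Φ Ψ : M → ℝ}
    (hΦ : Measurable Φ) (hΨ : Measurable Ψ) : Measurable (corrFun ω T Φ Ψ) :=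
  ((hΨ.comp measurable_snd).mul (hΦ.comp hT)).stronglyMeasurable.integral_prod_right'.measurable

theorem abs_corrFun_le {M : Type*} [MeasurableSpace M] (ω : Measure M) [IsProbabilityMeasure ω]
    (T : ℝ → M → M) {Φ Ψ : M → ℝ} {CΦ CΨ : ℝ} (hΦ : ∀ x, |Φ x| ≤ CΦ) (hΨ : ∀ x, |Ψ x| ≤ CΨ)
    (s : ℝ) : |corrFun ω T Φ Ψ s| ≤ CΨ * CΦ := by
  simpa [corrFun] using norm_integral_le_of_norm_le_const (μ := ω)
    (f := fun x => Ψ x * Φ (T s x)) (ae_of_all _ fun x => (abs_mul _ _).trans_le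
      (mul_le_mul (hΨ x) (hΦ _) (abs_nonneg _) ((abs_nonneg _).trans (hΨ x))))

theorem locallyIntegrable_corrFun {M : Type*} [MeasurableSpace M] (ω : Measure M)
    [IsProbabilityMeasure ω] {T : ℝ → M → M} (hT : Measurable fun p : ℝ × M => T p.1 p.2)
    {Φ Ψ : M → ℝ} (hΦm : Measurable Φ) (hΨm : Measurable Ψ) {CΦ CΨ : ℝ}
    (hΦb : ∀ x, |Φ x| ≤ CΦ) (hΨb : ∀ x, |Ψ x| ≤ CΨ) :
    LocallyIntegrable (corrFun ω T Φ Ψ) volume :=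
  (locallyIntegrable_const (CΨ * CΦ)).mono (measurable_corrFun ω hT hΦm hΨm).aestronglyMeasurable
    (ae_of_all _ fun s => (abs_corrFun_le ω T hΦb hΨb s).trans (le_abs_self _))

theorem green_kubo_cesaro_tauberian_general
    {M : Type*} [MeasurableSpace M] (ω : Measure M) [IsProbabilityMeasure ω]
    (T : ℝ → M → M)
    (hTjoint : Measurable fun p : ℝ × M => T p.1 p.2)
    (Φ Ψ : M → ℝ) (hΦm : Measurable Φ) (hΨm : Measurable Ψ)
    (CΦ : ℝ) (hΦb : ∀ x, |Φ x| ≤ CΦ) (CΨ : ℝ) (hΨb : ∀ x, |Ψ x| ≤ CΨ)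
    (K : ℝ) (hK : ∀ s : ℝ, 1 ≤ |s| → |s * corrFun ω T Φ Ψ s| ≤ K) :
    ∀ L : ℝ,
      Tendsto (fun t : ℝ => (1 / 2) * ∫ s in (-t)..t, corrFun ω T Φ Ψ s)
        atTop (nhds L)
      ↔ Tendsto (fun t : ℝ => (1 / 2) * ∫ s in (-t)..t, corrFun ω T Φ Ψ s * (1 - |s| / t))
        atTop (nhds L) := by
  intro L
  set C := corrFun ω T Φ Ψ
  have hC : LocallyIntegrable C volume := locallyIntegrable_corrFun ω hTjoint hΦm hΨm hΦb hΨb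
  have hweighted : ∀ t, 0 ≤ t → 1 / 2 * ∫ s in (-t)..t, C s * (1 - |s| / t) =
      ∫ s in 0..t, (C s + C (-s)) / 2 * (1 - s / t) := by
    intro t ht
    rw [half_mul_integral_neg_self_eq ((hC.intervalIntegrable _ _).mul_continuousOn
      (by fun_prop))]
    refine integral_congr fun s hs => ?_
    rw [Set.uIcc_of_le ht] at hs
    simp only [abs_neg, abs_of_nonneg hs.1]
    ring
  simp_rw [half_mul_integral_neg_self_eq (hC.intervalIntegrable _ _)]
  rw [tendsto_congr' ((eventually_ge_atTop 0).mono hweighted)]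
  exact tendsto_integral_iff_tendsto_integral_mul_one_sub_div
    hC.add_comp_neg_div_two fun s hs => abs_mul_add_comp_neg_div_two_le hK hs

/-- Cesàro/Tauberian equivalence for the finite time Green–Kubo formula: if `ω` is invariant,
`Φ, Ψ` are bounded measurable, and `C(s) = O(|s|^{-1})`, then for any `L`:
`(1/2)∫_{-t}^t C(s) ds → L` iff `(1/2)∫_{-t}^t C(s)(1-|s|/t) ds → L` as `t → ∞`. -/
theorem green_kubo_cesaro_tauberian
    {M : Type*} [MeasurableSpace M] (ω : Measure M) [IsProbabilityMeasure ω]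
    (T : ℝ → M → M)
    (hT0 : T 0 = id)
    (hTadd : ∀ s t : ℝ, T (s + t) = T s ∘ T t)
    (hTm : ∀ t : ℝ, Measurable (T t))
    (hTjoint : Measurable fun p : ℝ × M => T p.1 p.2)
    (hinv : ∀ t : ℝ, ω.map (T t) = ω)
    (Φ Ψ : M → ℝ) (hΦm : Measurable Φ) (hΨm : Measurable Ψ)
    (CΦ : ℝ) (hΦb : ∀ x, |Φ x| ≤ CΦ) (CΨ : ℝ) (hΨb : ∀ x, |Ψ x| ≤ CΨ)
    (K : ℝ) (hK : ∀ s : ℝ, 1 ≤ |s| → |s * corrFun ω T Φ Ψ s| ≤ K) :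
    ∀ L : ℝ,
      Tendsto (fun t : ℝ => (1 / 2) * ∫ s in (-t)..t, corrFun ω T Φ Ψ s)
        atTop (nhds L)
      ↔ Tendsto (fun t : ℝ => (1 / 2) * ∫ s in (-t)..t, corrFun ω T Φ Ψ s * (1 - |s| / t))
        atTop (nhds L) :=
  green_kubo_cesaro_tauberian_general ω T hTjoint Φ Ψ hΦm hΨm CΦ hΦb CΨ hΨb K hK
end

section
/- Suppose φ is an expansive homeomorphism with specification and V, W : M → ℝ are regular continuous potentials. Then the following are equivalent: (1) V and W are physically equivalent, i.e. lim_{n→∞} (1/n) sup_{x∈M} |S_n V(x) − S_n W(x)| = 0; (2) for all n ≥ 1 and all x ∈ M with φ^n(x) = x one has S_n V(x) = S_n W(x). -/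
open Filter

section TopDyn

variable {M : Type*} [MetricSpace M]

/-- Birkhoff sum `S_n f := Σ_{j=0}^{n-1} f ∘ φ^j`. -/
def birkhoff (φ : M → M) (f : M → ℝ) (n : ℕ) (x : M) : ℝ :=
  ∑ j ∈ Finset.range n, f (φ^[j] x)

/-- The Bowen ball `B_n(x,ε) := {y : max_{0≤j≤n-1} d(φ^j x, φ^j y) < ε}`. -/
def bowenBall (φ : M → M) (n : ℕ) (x : M) (ε : ℝ) : Set M :=
  {y | ∀ j < n, dist (φ^[j] x) (φ^[j] y) < ε}

/-- The homeomorphism `φ` is expansive: `∃ r > 0` such that `d(φ^n x, φ^n y) ≤ r` for all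
`n ∈ ℤ` forces `x = y`. -/
def Expansive (φ : M ≃ₜ M) : Prop :=
  ∃ r > (0 : ℝ), ∀ x y : M,
    (∀ n : ℤ, dist ((φ.toEquiv ^ n) x) ((φ.toEquiv ^ n) y) ≤ r) → x = y

/-- The specification property: for every `δ > 0` there is `p(δ) > 0` such that any finite
family of orbit segments over integer intervals `[lo i, hi i] ⊆ [a,b]` that are mutually
`> p(δ)` apart can be `δ`-shadowed by a single periodic orbit of period `b - a + p(δ)`. -/
def Specification (φ : M ≃ₜ M) : Prop :=
  ∀ δ : ℝ, 0 < δ → ∃ p : ℕ, 0 < p ∧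
    ∀ (a b : ℤ), a < b → ∀ (m : ℕ) (lo hi : Fin m → ℤ) (xs : Fin m → M),
      (∀ i, a ≤ lo i ∧ lo i ≤ hi i ∧ hi i ≤ b) →
      (∀ i j, i ≠ j → ∀ k ∈ Finset.Icc (lo i) (hi i), ∀ l ∈ Finset.Icc (lo j) (hi j),
        (p : ℤ) < |k - l|) →
      ∃ x : M, (φ.toEquiv ^ (b - a + (p : ℤ))) x = x ∧
        ∀ i, ∀ k ∈ Finset.Icc (lo i) (hi i),
          dist ((φ.toEquiv ^ k) x) ((φ.toEquiv ^ k) (xs i)) < δ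

/-- A continuous potential `V` is regular: for every sufficiently small `ε > 0` there is
`C_ε > 0` with `|S_n V(x) - S_n V(y)| < C_ε` whenever `y ∈ B_n(x,ε)`. -/
def RegularPotential (φ : M ≃ₜ M) (V : M → ℝ) : Prop :=
  ∃ ε₀ > (0 : ℝ), ∀ ε : ℝ, 0 < ε → ε < ε₀ → ∃ C : ℝ, 0 < C ∧
    ∀ n : ℕ, 1 ≤ n → ∀ x y : M, y ∈ bowenBall (⇑φ) n x ε →
      |birkhoff (⇑φ) V n x - birkhoff (⇑φ) V n y| < C

/-- `V` and `W` are physically equivalent: `(1/n) sup_x |S_n V(x) - S_n W(x)| → 0`. -/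
def PhysEquiv (φ : M ≃ₜ M) (V W : M → ℝ) : Prop :=
  Tendsto (fun n : ℕ => (n : ℝ)⁻¹ * ⨆ x : M, |birkhoff (⇑φ) V n x - birkhoff (⇑φ) W n x|)
    atTop (nhds 0)

end TopDyn

/-! If `S_n (V - W)` vanishes on every periodic orbit, specification shadows an arbitrary orbit
segment of length `n` by a periodic orbit of period `n + p`; regularity makes the Birkhoff sums of
the two segments differ by a bounded amount, and the last `p` steps of the periodic orbit contribute
at most `p ‖V - W‖_∞`. Hence `S_n (V - W)` is bounded uniformly in `n`. Conversely, at a point of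
period `n` one has `S_{kn} (V - W) = k S_n (V - W)`, which is incompatible with sublinear growth
unless `S_n (V - W) = 0` there. -/

open Function

section BirkhoffSum

variable {α G : Type*}

theorem Function.IsPeriodicPt.birkhoffSum_mul [AddCommMonoid G] {f : α → α} {n : ℕ} {x : α}
    (hx : IsPeriodicPt f n x) (g : α → G) (k : ℕ) :
    birkhoffSum f g (k * n) x = k • birkhoffSum f g n x := by
  induction k with
  | zero => simp
  | succ k ih => rw [Nat.succ_mul, birkhoffSum_add, (hx.const_mul k).eq, ih, succ_nsmul]

theorem norm_birkhoffSum_le [SeminormedAddCommGroup G] (f : α → α) {g : α → G} {K : ℝ}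
    (hg : ∀ y, ‖g y‖ ≤ K) (n : ℕ) (x : α) : ‖birkhoffSum f g n x‖ ≤ n * K :=
  calc ‖birkhoffSum f g n x‖ ≤ ∑ j ∈ Finset.range n, ‖g (f^[j] x)‖ := norm_sum_le _ _
    _ ≤ n * K := by
      simpa using Finset.sum_le_card_nsmul (Finset.range n) _ K fun j _ => hg (f^[j] x)

theorem Continuous.birkhoffSum [TopologicalSpace α] [TopologicalSpace G] [AddCommMonoid G]
    [ContinuousAdd G] {f : α → α} (hf : Continuous f) {g : α → G} (hg : Continuous g) (n : ℕ) :
    Continuous (birkhoffSum f g n) :=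
  continuous_finsetSum _ fun j _ => hg.comp (hf.iterate j)

theorem birkhoffSum_eq_zero_of_tendsto [TopologicalSpace α] [CompactSpace α] {f : α → α}
    (hf : Continuous f) {g : α → ℝ} (hg : Continuous g)
    (h : Tendsto (fun n : ℕ => (n : ℝ)⁻¹ * ⨆ y, |birkhoffSum f g n y|) atTop (nhds 0))
    {n : ℕ} (hn : 0 < n) {x : α} (hx : IsPeriodicPt f n x) : birkhoffSum f g n x = 0 := by
  set c := |birkhoffSum f g n x|
  have hbound : ∀ k : ℕ, 1 ≤ k →
      c ≤ n * (((k * n : ℕ) : ℝ)⁻¹ * ⨆ y, |birkhoffSum f g (k * n) y|) := by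
    intro k hk
    have hkc : k * c ≤ ⨆ y, |birkhoffSum f g (k * n) y| :=
      calc k * c = |birkhoffSum f g (k * n) x| := by
            rw [hx.birkhoffSum_mul, nsmul_eq_mul, abs_mul, Nat.abs_cast]
        _ ≤ _ := le_ciSup (isCompact_range (hf.birkhoffSum hg _).abs).bddAbove x
    have hk : (0 : ℝ) < k := by exact_mod_cast hk
    rw [show (n : ℝ) * (((k * n : ℕ) : ℝ)⁻¹ * ⨆ y, |birkhoffSum f g (k * n) y|) =
        (⨆ y, |birkhoffSum f g (k * n) y|) / k by push_cast; field_simp, le_div_iff₀ hk]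
    linarith
  have hlim : Tendsto (fun k : ℕ =>
      n * (((k * n : ℕ) : ℝ)⁻¹ * ⨆ y, |birkhoffSum f g (k * n) y|)) atTop (nhds 0) := by
    simpa using (h.comp (tendsto_id.atTop_mul_const' hn)).const_mul (n : ℝ)
  exact abs_eq_zero.mp <|
    le_antisymm (ge_of_tendsto hlim (eventually_atTop.mpr ⟨1, hbound⟩)) (abs_nonneg _)

theorem tendsto_inv_mul_iSup_abs_of_eventually_le (F : ℕ → α → ℝ) {B : ℝ}
    (h : ∀ᶠ n in atTop, ∀ x, |F n x| ≤ B) :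
    Tendsto (fun n : ℕ => (n : ℝ)⁻¹ * ⨆ x, |F n x|) atTop (nhds 0) := by
  refine squeeze_zero' (Eventually.of_forall fun n =>
      mul_nonneg (by positivity) (Real.iSup_nonneg fun x => abs_nonneg _))
    (h.mono fun n hn => mul_le_mul_of_nonneg_left
      (Real.iSup_le (fun x => (hn x).trans (le_max_left B 0)) (le_max_right B 0)) (by positivity))
    ?_
  simpa using tendsto_inv_atTop_nhds_zero_nat.mul_const (max B 0)

end BirkhoffSum

section PhysicalEquivalence

variable {M : Type*}

theorem birkhoff_eq_birkhoffSum (φ : M → M) (f : M → ℝ) : birkhoff φ f = birkhoffSum φ f := rfl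

theorem birkhoff_eq_birkhoff_iff (φ : M → M) (V W : M → ℝ) (n : ℕ) (x : M) :
    birkhoff φ V n x = birkhoff φ W n x ↔ birkhoffSum φ (V - W) n x = 0 := by
  rw [birkhoffSum_sub, sub_eq_zero, birkhoff_eq_birkhoffSum, birkhoff_eq_birkhoffSum]

theorem Homeomorph.toEquiv_zpow_natCast_apply [TopologicalSpace M] (φ : M ≃ₜ M) (j : ℕ) (y : M) :
    (φ.toEquiv ^ (j : ℤ)) y = φ^[j] y := by
  rw [zpow_natCast, ← Equiv.Perm.iterate_eq_pow, Homeomorph.coe_toEquiv]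

variable [MetricSpace M]

theorem physEquiv_iff_tendsto_birkhoffSum_sub (φ : M ≃ₜ M) (V W : M → ℝ) :
    PhysEquiv φ V W ↔
      Tendsto (fun n : ℕ => (n : ℝ)⁻¹ * ⨆ x, |birkhoffSum φ (V - W) n x|) atTop (nhds 0) := by
  simp only [PhysEquiv, birkhoff_eq_birkhoffSum, birkhoffSum_sub]

theorem Specification.exists_isPeriodicPt_mem_bowenBall {φ : M ≃ₜ M} (hspec : Specification φ)
    {δ : ℝ} (hδ : 0 < δ) :
    ∃ p : ℕ, ∀ n : ℕ, 1 ≤ n → ∀ x : M,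
      ∃ z, IsPeriodicPt φ (n + p) z ∧ z ∈ bowenBall φ n x δ := by
  obtain ⟨p, -, hp⟩ := hspec δ hδ
  refine ⟨p, fun n hn x => ?_⟩
  obtain ⟨z, hper, hshadow⟩ := hp 0 n (by exact_mod_cast hn) 1 (fun _ => 0) (fun _ => n - 1)
    (fun _ => x) (fun _ => ⟨le_rfl, by omega, by omega⟩)
    (fun i j hij => (hij (Subsingleton.elim i j)).elim)
  refine ⟨z, ?_, fun j hj => ?_⟩
  · rwa [sub_zero, ← Nat.cast_add, φ.toEquiv_zpow_natCast_apply] at hper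
  · have := hshadow 0 j (Finset.mem_Icc.mpr ⟨by positivity, by omega⟩)
    rwa [φ.toEquiv_zpow_natCast_apply, φ.toEquiv_zpow_natCast_apply, dist_comm] at this

theorem RegularPotential.sub {φ : M ≃ₜ M} {V W : M → ℝ} (hV : RegularPotential φ V)
    (hW : RegularPotential φ W) : RegularPotential φ (V - W) := by
  obtain ⟨εV, hεV, hV⟩ := hV
  obtain ⟨εW, hεW, hW⟩ := hW
  refine ⟨min εV εW, lt_min hεV hεW, fun ε hε hεlt => ?_⟩
  obtain ⟨CV, hCV, hV⟩ := hV ε hε (hεlt.trans_le (min_le_left _ _))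
  obtain ⟨CW, hCW, hW⟩ := hW ε hε (hεlt.trans_le (min_le_right _ _))
  refine ⟨CV + CW, by positivity, fun n hn x y hy => ?_⟩
  have hVxy := hV n hn x y hy
  have hWxy := hW n hn x y hy
  simp only [birkhoff_eq_birkhoffSum, birkhoffSum_sub, abs_lt] at hVxy hWxy ⊢
  constructor <;> linarith

theorem exists_abs_birkhoffSum_le_of_forall_isPeriodicPt [CompactSpace M] {φ : M ≃ₜ M}
    (hspec : Specification φ) {g : M → ℝ} (hg : Continuous g) (hreg : RegularPotential φ g)
    (hper : ∀ n : ℕ, 1 ≤ n → ∀ x : M, IsPeriodicPt φ n x → birkhoffSum φ g n x = 0) :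
    ∃ B, ∀ n : ℕ, 1 ≤ n → ∀ x : M, |birkhoffSum φ g n x| ≤ B := by
  obtain ⟨ε₀, hε₀, hreg⟩ := hreg
  obtain ⟨C, -, hC⟩ := hreg (ε₀ / 2) (half_pos hε₀) (half_lt_self hε₀)
  obtain ⟨p, hp⟩ := hspec.exists_isPeriodicPt_mem_bowenBall (half_pos hε₀)
  obtain ⟨K, hK⟩ := isCompact_univ.exists_bound_of_continuousOn hg.continuousOn
  refine ⟨C + p * K, fun n hn x => ?_⟩
  obtain ⟨z, hz, hxz⟩ := hp n hn x
  have hclose : |birkhoffSum φ g n x - birkhoffSum φ g n z| < C := hC n hn x z hxz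
  have hclosing : birkhoffSum φ g n z = -birkhoffSum φ g p (φ^[n] z) := by
    rw [eq_neg_iff_add_eq_zero, ← birkhoffSum_add]
    exact hper _ (by omega) z hz
  have htail : |birkhoffSum φ g n z| ≤ p * K := by
    rw [hclosing, abs_neg]
    exact norm_birkhoffSum_le φ (fun y => hK y (Set.mem_univ y)) p _
  linarith [abs_sub_abs_le_abs_sub (birkhoffSum φ g n x) (birkhoffSum φ g n z)]

end PhysicalEquivalence

theorem phys_equiv_iff_equal_on_periodic_orbits_general
    {M : Type*} [MetricSpace M] [CompactSpace M]
    (φ : M ≃ₜ M) (hspec : Specification φ)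
    (V W : M → ℝ) (hVc : Continuous V) (hWc : Continuous W)
    (hVreg : RegularPotential φ V) (hWreg : RegularPotential φ W) :
    PhysEquiv φ V W ↔
      ∀ n : ℕ, 1 ≤ n → ∀ x : M, (⇑φ)^[n] x = x →
        birkhoff (⇑φ) V n x = birkhoff (⇑φ) W n x := by
  simp only [physEquiv_iff_tendsto_birkhoffSum_sub, birkhoff_eq_birkhoff_iff]
  constructor
  · intro h n hn x hx
    exact birkhoffSum_eq_zero_of_tendsto φ.continuous (hVc.sub hWc) h hn hx
  · intro hper
    obtain ⟨B, hB⟩ := exists_abs_birkhoffSum_le_of_forall_isPeriodicPt hspec (hVc.sub hWc)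
      (hVreg.sub hWreg) hper
    exact tendsto_inv_mul_iSup_abs_of_eventually_le _ (eventually_atTop.mpr ⟨1, hB⟩)

/-- For an expansive homeomorphism with specification and regular potentials `V, W`,
physical equivalence of `V` and `W` is equivalent to the equality of the Birkhoff sums
`S_n V = S_n W` on all periodic points of period `n`. -/
theorem phys_equiv_iff_equal_on_periodic_orbits
    {M : Type*} [MetricSpace M] [CompactSpace M]
    (φ : M ≃ₜ M) (hexp : Expansive φ) (hspec : Specification φ)
    (V W : M → ℝ) (hVc : Continuous V) (hWc : Continuous W)
    (hVreg : RegularPotential φ V) (hWreg : RegularPotential φ W) :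
    PhysEquiv φ V W ↔
      ∀ n : ℕ, 1 ≤ n → ∀ x : M, (⇑φ)^[n] x = x →
        birkhoff (⇑φ) V n x = birkhoff (⇑φ) W n x :=
  phys_equiv_iff_equal_on_periodic_orbits_general φ hspec V W hVc hWc hVreg hWreg
end

section
/- Suppose φ has finite topological entropy (P(0) < ∞), let ϑ : M → M be a continuous involution (ϑ ∘ ϑ = id) with ϑ ∘ φ = φ^{−1} ∘ ϑ, let V : M → ℝ be continuous, and let ν be a non-atomic, φ-invariant (ν ∘ φ^{−1} = ν) Borel probability measure with ν ∈ S_V. Then ∫_M (V − V ∘ ϑ) dν ≥ 0. -/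
open MeasureTheory Filter

section TopDyn

variable {M : Type*} [MetricSpace M]

/-- `E` is `(n,ε)`-separated: distinct points of `E` are not in each other's Bowen balls. -/
def IsSeparatedSet (φ : M → M) (n : ℕ) (ε : ℝ) (E : Finset M) : Prop :=
  ∀ x ∈ E, ∀ y ∈ E, x ≠ y → y ∉ bowenBall φ n x ε

/-- The partition function `Z_n(W,ε) := sup {Σ_{x∈E} e^{S_n W(x)} : E (n,ε)-separated}`,
computed in `[0,∞]`. -/
noncomputable def Zpart (φ : M → M) (W : M → ℝ) (n : ℕ) (ε : ℝ) : ENNReal :=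
  ⨆ (E : Finset M) (_ : IsSeparatedSet φ n ε E),
    ∑ x ∈ E, ENNReal.ofReal (Real.exp (birkhoff φ W n x))

/-- Extended-real logarithm on `[0,∞]`. -/
noncomputable def elog (x : ENNReal) : EReal :=
  if x = ⊤ then ⊤ else if x = 0 then ⊥ else ((Real.log x.toReal : ℝ) : EReal)

/-- `limsup_n (1/n) log Z_n(W,ε)`; the topological pressure `P(W)` is its limit as `ε ↓ 0`. -/
noncomputable def pressureApprox (φ : M → M) (W : M → ℝ) (ε : ℝ) : EReal :=
  atTop.limsup fun n : ℕ => (((n : ℝ)⁻¹ : ℝ) : EReal) * elog (Zpart φ W n ε)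

/-- The condition `ν ∈ S_V`: for all sufficiently small `ε > 0` there are constants
`C_n(ε) > 0` with `(1/n) log C_n(ε) → 0` such that
`C_n(ε)⁻¹ ≤ ν(B_n(x,ε)) e^{-S_n V(x)} ≤ C_n(ε)` for all `x` and `n ≥ 1`. -/
def memSV [MeasurableSpace M] (φ : M → M) (V : M → ℝ) (ν : Measure M) : Prop :=
  ∃ ε₀ > (0 : ℝ), ∀ ε : ℝ, 0 < ε → ε < ε₀ →
    ∃ C : ℕ → ℝ, (∀ n, 0 < C n) ∧
      Tendsto (fun n : ℕ => Real.log (C n) / n) atTop (nhds 0) ∧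
      ∀ n : ℕ, 1 ≤ n → ∀ x : M,
        (C n)⁻¹ ≤ (ν (bowenBall φ n x ε)).toReal * Real.exp (-(birkhoff φ V n x)) ∧
        (ν (bowenBall φ n x ε)).toReal * Real.exp (-(birkhoff φ V n x)) ≤ C n

end TopDyn

/-! Put `g = V ∘ ϑ - V` and suppose `c = ∫ g dν > 0`. By invariance `∫ S_n g dν = n c`, and `g`
is bounded, so the sets `A_n = {S_n g ≥ n c / 2}` have measure bounded below uniformly in `n`.
On the other hand, cover `A_n` by the Bowen balls `B_n(x, ε)` of a maximal `(n, ε)`-separated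
subset of `A_n`. The upper Gibbs bound gives
`ν(B_n(x, ε)) ≲ e^{S_n V(x)} ≤ e^{-n c / 2} e^{S_n (V ∘ ϑ)(x)}`, while time reversal turns the
lower Gibbs bound at `φ^{-(n-1)}(ϑ x)` into `e^{S_n (V ∘ ϑ)(x)} ≲ ν(ϑ⁻¹ B_n(x, ε / 2))`. The
reversed balls are disjoint, so `ν(A_n) ≲ e^{-n c / 2}` up to subexponential factors, a
contradiction. -/

open MeasureTheory Filter Function Set Real Topology

lemma integral_le_mul_measureReal_setOf_le_add {α : Type*} [MeasurableSpace α] {μ : Measure α}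
    [IsProbabilityMeasure μ] {f : α → ℝ} (hf : Integrable f μ) (hfm : Measurable f) {b t : ℝ}
    (hfb : ∀ x, f x ≤ b) (ht : 0 ≤ t) :
    ∫ x, f x ∂μ ≤ b * μ.real {x | t ≤ f x} + t := by
  set A := {x | t ≤ f x}
  have hA : MeasurableSet A := measurableSet_le measurable_const hfm
  have hpt : ∀ x, f x ≤ A.indicator (fun _ => b) x + t := fun x => by
    by_cases hx : x ∈ A
    · simpa [indicator_of_mem hx] using (hfb x).trans (le_add_of_nonneg_right ht)
    · simpa [indicator_of_notMem hx] using (not_le.1 hx).le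
  calc ∫ x, f x ∂μ ≤ ∫ x, (A.indicator (fun _ => b) x + t) ∂μ :=
        integral_mono hf (((integrable_const b).indicator hA).add (integrable_const t)) hpt
    _ = b * μ.real A + t := by
        rw [integral_add ((integrable_const b).indicator hA) (integrable_const t),
          integral_indicator_const b hA]
        simp [mul_comm]

lemma tendsto_mul_exp_neg_mul_atTop {a : ℕ → ℝ} (ha : ∀ n, 0 < a n)
    (hlog : Tendsto (fun n : ℕ => log (a n) / n) atTop (𝓝 0)) {s : ℝ} (hs : 0 < s) :
    Tendsto (fun n : ℕ => a n * exp (-(n * s))) atTop (𝓝 0) := by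
  have hexponent : Tendsto (fun n : ℕ => (n : ℝ) * (log (a n) / n - s)) atTop atBot :=
    tendsto_natCast_atTop_atTop.atTop_mul_neg (by linarith : 0 - s < 0) (hlog.sub_const s)
  refine (tendsto_exp_atBot.comp hexponent).congr' ?_
  filter_upwards [eventually_ne_atTop 0] with n hn
  rw [comp_apply, mul_sub, mul_div_cancel₀ _ (Nat.cast_ne_zero.2 hn), sub_eq_add_neg,
    exp_add, exp_log (ha n)]

section BowenBall

variable {M : Type*} [MetricSpace M] {φ : M → M} {n : ℕ} {x y z : M} {ε δ : ℝ}

lemma mem_bowenBall_self (hε : 0 < ε) : x ∈ bowenBall φ n x ε :=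
  fun j _ => by simpa using hε

lemma mem_bowenBall_comm : y ∈ bowenBall φ n x ε ↔ x ∈ bowenBall φ n y ε := by
  simp only [bowenBall, mem_ofPred_eq, dist_comm]

lemma mem_bowenBall_of_mem_of_mem (hy : y ∈ bowenBall φ n x ε) (hz : z ∈ bowenBall φ n y δ) :
    z ∈ bowenBall φ n x (ε + δ) :=
  fun j hj => (dist_triangle _ _ _).trans_lt (add_lt_add (hy j hj) (hz j hj))

lemma isOpen_bowenBall (hφ : Continuous φ) (n : ℕ) (x : M) (ε : ℝ) :
    IsOpen (bowenBall φ n x ε) := by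
  have : bowenBall φ n x ε = ⋂ j ∈ Iio n, {y | dist (φ^[j] x) (φ^[j] y) < ε} := by
    ext; simp [bowenBall]
  rw [this]
  exact (finite_Iio n).isOpen_biInter fun j _ =>
    isOpen_lt (continuous_const.dist (hφ.iterate j)) continuous_const

lemma IsSeparatedSet.pairwiseDisjoint {E : Finset M} (hE : IsSeparatedSet φ n ε E) :
    (E : Set M).PairwiseDisjoint fun x => bowenBall φ n x (ε / 2) := by
  intro x hx y hy hxy
  refine disjoint_left.2 fun z hzx hzy => hE x hx y hy hxy ?_
  simpa using mem_bowenBall_of_mem_of_mem hzx (mem_bowenBall_comm.1 hzy)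

lemma IsSeparatedSet.insert [DecidableEq M] {E : Finset M} (hE : IsSeparatedSet φ n ε E)
    (hy : ∀ x ∈ E, y ∉ bowenBall φ n x ε) : IsSeparatedSet φ n ε (insert y E) := by
  intro a ha b hb hab
  rcases Finset.mem_insert.1 ha with rfl | haE <;> rcases Finset.mem_insert.1 hb with rfl | hbE
  · exact absurd rfl hab
  · exact fun h => hy b hbE (mem_bowenBall_comm.1 h)
  · exact hy a haE
  · exact hE a haE b hbE hab

variable [CompactSpace M]

/-- No two points of a separated set lie in the same ball of a finite cover by balls of half the
radius. -/
lemma IsSeparatedSet.bddAbove_card (hφ : Continuous φ) (n : ℕ) (hε : 0 < ε) :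
    BddAbove (Finset.card '' {E : Finset M | IsSeparatedSet φ n ε E}) := by
  obtain ⟨t, ht⟩ := isCompact_univ.elim_finite_subcover (fun c => bowenBall φ n c (ε / 2))
    (fun c => isOpen_bowenBall hφ n c _)
    fun y _ => mem_iUnion.2 ⟨y, mem_bowenBall_self (half_pos hε)⟩
  refine ⟨t.card, ?_⟩
  rintro _ ⟨E, hE, rfl⟩
  have hcenter : ∀ x ∈ E, ∃ c ∈ t, c ∈ bowenBall φ n x (ε / 2) := fun x _ => by
    simpa [mem_bowenBall_comm] using ht (mem_univ x)
  choose! c hct hc using hcenter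
  exact Finset.card_le_card_of_injOn c hct fun x hx y hy hxy =>
    hE.pairwiseDisjoint.elim_set hx hy (c x) (hc x hx) (hxy ▸ hc y hy)

/-- A separated subset of `A` of maximal cardinality covers `A` by Bowen balls. -/
lemma exists_isSeparatedSet_subset_cover (hφ : Continuous φ) (n : ℕ) (hε : 0 < ε) (A : Set M) :
    ∃ E : Finset M, ↑E ⊆ A ∧ IsSeparatedSet φ n ε E ∧ A ⊆ ⋃ x ∈ E, bowenBall φ n x ε := by
  classical
  set S := {E : Finset M | ↑E ⊆ A ∧ IsSeparatedSet φ n ε E}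
  have hbdd : BddAbove (Finset.card '' S) :=
    (IsSeparatedSet.bddAbove_card hφ n hε).mono (image_mono fun E hE => hE.2)
  obtain ⟨E, ⟨hEA, hE⟩, hcard⟩ := Nat.sSup_mem (s := Finset.card '' S)
    ⟨0, ∅, ⟨by simp, by simp [IsSeparatedSet]⟩, rfl⟩ hbdd
  refine ⟨E, hEA, hE, fun y hy => ?_⟩
  by_contra hcov
  simp only [mem_iUnion, not_exists] at hcov
  have hyE : y ∉ E := fun h => hcov y h (mem_bowenBall_self hε)
  have hmax := le_csSup hbdd (mem_image_of_mem _
    (show insert y E ∈ S from ⟨by simpa [insert_subset_iff] using ⟨hy, hEA⟩, hE.insert hcov⟩))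
  rw [Finset.card_insert_of_notMem hyE, ← hcard] at hmax
  omega

end BowenBall

section Birkhoff

variable {M : Type*} {φ : M → M}

lemma birkhoff_sub (f g : M → ℝ) (n : ℕ) (x : M) :
    birkhoff φ (fun y => f y - g y) n x = birkhoff φ f n x - birkhoff φ g n x :=
  Finset.sum_sub_distrib ..

lemma birkhoff_le_mul {f : M → ℝ} {b : ℝ} (hf : ∀ x, f x ≤ b) (n : ℕ) (x : M) :
    birkhoff φ f n x ≤ n * b := by
  unfold birkhoff
  simpa using Finset.sum_le_sum fun j (_ : j ∈ Finset.range n) => hf (φ^[j] x)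

lemma continuous_birkhoff [TopologicalSpace M] (hφ : Continuous φ) {f : M → ℝ}
    (hf : Continuous f) (n : ℕ) :
    Continuous (birkhoff φ f n) :=
  continuous_finsetSum _ fun j _ => hf.comp (hφ.iterate j)

lemma integral_birkhoff [MeasurableSpace M] {μ : Measure M} (hφ : MeasurePreserving φ μ μ)
    {f : M → ℝ} (hf : Integrable f μ) (n : ℕ) :
    ∫ x, birkhoff φ f n x ∂μ = n * ∫ x, f x ∂μ := by
  have hcomp (j : ℕ) : ∫ x, f (φ^[j] x) ∂μ = ∫ x, f x ∂μ := by
    have hmap := (hφ.iterate j).map_eq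
    rw [← integral_map (hφ.iterate j).measurable.aemeasurable
      (hmap.symm ▸ hf.aestronglyMeasurable), hmap]
  unfold birkhoff
  exact (integral_finsetSum _ fun j _ => (hφ.iterate j).integrable_comp_of_integrable hf).trans
    (by simp [hcomp])

end Birkhoff

section Reversal

variable {M : Type*} {f g ϑ : M → M}

lemma iterate_apply_reversal_iterate_add (hfg : LeftInverse f g) (hϑ : Semiconj ϑ f g)
    (j k : ℕ) (u : M) : f^[j] (ϑ (f^[j + k] u)) = ϑ (f^[k] u) := by
  rw [iterate_add_apply, hϑ.iterate_right j, hfg.iterate j]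

lemma birkhoff_comp_reversal (hfg : LeftInverse f g) (hϑ : Semiconj ϑ f g)
    (hϑϑ : Involutive ϑ) (V : M → ℝ) (n : ℕ) (z : M) :
    birkhoff f (V ∘ ϑ) (n + 1) (ϑ (f^[n] z)) = birkhoff f V (n + 1) z := by
  unfold birkhoff
  conv_rhs => rw [← Finset.sum_range_reflect]
  refine Finset.sum_congr rfl fun j hj => ?_
  obtain ⟨k, rfl⟩ : ∃ k, n = j + k := ⟨n - j, by simp at hj; omega⟩
  rw [comp_apply, iterate_apply_reversal_iterate_add hfg hϑ, hϑϑ]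
  congr 2
  omega

lemma mapsTo_bowenBall_reversal [MetricSpace M] (hfg : LeftInverse f g)
    (hϑ : Semiconj ϑ f g) {ε δ : ℝ} (hδ : ∀ a b, dist a b < δ → dist (ϑ a) (ϑ b) < ε)
    (n : ℕ) (z : M) :
    MapsTo (ϑ ∘ f^[n]) (bowenBall f (n + 1) z δ) (bowenBall f (n + 1) (ϑ (f^[n] z)) ε) := by
  intro w hw j hj
  obtain ⟨k, rfl⟩ : ∃ k, n = j + k := ⟨n - j, by omega⟩
  simp only [comp_apply, iterate_apply_reversal_iterate_add hfg hϑ]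
  exact hδ _ _ (hw k (by omega))

end Reversal

section Gibbs

variable {M : Type*} [MetricSpace M] [MeasurableSpace M] {ν : Measure M}

lemma memSV.exists_bounds {φ : M → M} {V : M → ℝ} (h : memSV φ V ν) :
    ∃ ε₀ > 0, ∀ ε, 0 < ε → ε < ε₀ → ∃ C : ℕ → ℝ, (∀ n, 0 < C n) ∧
      Tendsto (fun n : ℕ => log (C n) / n) atTop (𝓝 0) ∧ ∀ n, 1 ≤ n → ∀ x,
        ν.real (bowenBall φ n x ε) ≤ C n * exp (birkhoff φ V n x) ∧
        exp (birkhoff φ V n x) ≤ C n * ν.real (bowenBall φ n x ε) := by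
  obtain ⟨ε₀, hε₀, hC⟩ := h
  refine ⟨ε₀, hε₀, fun ε hε hεε₀ => ?_⟩
  obtain ⟨C, hCpos, hlog, hb⟩ := hC ε hε hεε₀
  refine ⟨C, hCpos, hlog, fun n hn x => ?_⟩
  obtain ⟨hlow, hup⟩ := hb n hn x
  set s := birkhoff φ V n x
  have hcancel (r : ℝ) : r * exp (-s) * exp s = r := by
    rw [mul_assoc, ← exp_add, neg_add_cancel, exp_zero, mul_one]
  constructor
  · calc ν.real (bowenBall φ n x ε) = ν.real (bowenBall φ n x ε) * exp (-s) * exp s :=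
          (hcancel _).symm
      _ ≤ C n * exp s := by gcongr; exact hup
  · calc exp s = C n * (C n)⁻¹ * exp s := by rw [mul_inv_cancel₀ (hCpos n).ne', one_mul]
      _ ≤ C n * (ν.real (bowenBall φ n x ε) * exp (-s)) * exp s := by
          gcongr
          · exact (hCpos n).le
          · exact hlow
      _ = C n * ν.real (bowenBall φ n x ε) := by rw [mul_assoc (C n), hcancel]

section Opens

variable [OpensMeasurableSpace M] {ϑ : M → M}

/-- Every `x` is `ϑ (f^[n] z)` for `z = g^[n] (ϑ x)`, and `ϑ ∘ f^[n]` maps a Bowen ball around `z`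
into the reversed ball around `x`, whose measure does not change when pulled back by `f^[n]`. -/
lemma exp_birkhoff_comp_le_measureReal_preimage [IsFiniteMeasure ν] {f g : M → M}
    (hfc : Continuous f) (hf : MeasurePreserving f ν ν) (hfg : LeftInverse f g)
    (hϑ : Semiconj ϑ f g) (hϑϑ : Involutive ϑ) (hϑm : Measurable ϑ) {V : M → ℝ} {ε δ C : ℝ}
    (hC : 0 ≤ C)
    (hδ : ∀ a b, dist a b < δ → dist (ϑ a) (ϑ b) < ε) {n : ℕ}
    (hlow : ∀ z, exp (birkhoff f V (n + 1) z) ≤ C * ν.real (bowenBall f (n + 1) z δ)) (x : M) :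
    exp (birkhoff f (V ∘ ϑ) (n + 1) x) ≤ C * ν.real (ϑ ⁻¹' bowenBall f (n + 1) x ε) := by
  obtain ⟨z, rfl⟩ : ∃ z, ϑ (f^[n] z) = x := ⟨g^[n] (ϑ x), by rw [hfg.iterate n, hϑϑ]⟩
  rw [birkhoff_comp_reversal hfg hϑ hϑϑ, ← (hf.iterate n).measureReal_preimage
    (hϑm (isOpen_bowenBall hfc _ _ _).measurableSet).nullMeasurableSet]
  exact (hlow z).trans (mul_le_mul_of_nonneg_left
    (measureReal_mono (mapsTo_bowenBall_reversal hfg hϑ hδ n z) (measure_ne_top _ _)) hC)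

/-- Cover `A` by the Bowen balls of a maximal separated subset `E ⊆ A`. The reversed balls
`ϑ ⁻¹' bowenBall φ n x (ε / 2)`, `x ∈ E`, are disjoint, so the lower bounds `hlow` sum to at
most `C'`. -/
lemma measureReal_le_of_le_birkhoff_sub [CompactSpace M] [IsProbabilityMeasure ν] {φ : M → M}
    (hφ : Continuous φ) (hϑ : Measurable ϑ)
    {V W : M → ℝ} {n : ℕ} {ε C C' t : ℝ} (hε : 0 < ε) (hC : 0 ≤ C) (hC' : 0 ≤ C')
    (hup : ∀ x, ν.real (bowenBall φ n x ε) ≤ C * exp (birkhoff φ V n x))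
    (hlow : ∀ x, exp (birkhoff φ W n x) ≤ C' * ν.real (ϑ ⁻¹' bowenBall φ n x (ε / 2)))
    {A : Set M} (hA : ∀ x ∈ A, t ≤ birkhoff φ W n x - birkhoff φ V n x) :
    ν.real A ≤ C * C' * exp (-t) := by
  obtain ⟨E, hEA, hE, hcover⟩ := exists_isSeparatedSet_subset_cover hφ n hε A
  have hdisj : ∑ x ∈ E, ν.real (ϑ ⁻¹' bowenBall φ n x (ε / 2)) ≤ 1 := by
    rw [← measureReal_biUnion_finset
      (fun a ha b hb hab => (hE.pairwiseDisjoint ha hb hab).preimage ϑ)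
      fun x _ => hϑ (isOpen_bowenBall hφ n x _).measurableSet]
    exact measureReal_le_one
  calc ν.real A ≤ ∑ x ∈ E, ν.real (bowenBall φ n x ε) :=
        (measureReal_mono hcover (measure_ne_top _ _)).trans (measureReal_biUnion_finset_le _ _)
    _ ≤ ∑ x ∈ E, C * (exp (-t) * exp (birkhoff φ W n x)) := by
        gcongr with x hx
        refine (hup x).trans (mul_le_mul_of_nonneg_left ?_ hC)
        rw [← exp_add]
        exact exp_le_exp.2 (by linarith [hA x (hEA hx)])
    _ ≤ ∑ x ∈ E, C * (exp (-t) * (C' * ν.real (ϑ ⁻¹' bowenBall φ n x (ε / 2)))) := by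
        gcongr with x
        exact hlow x
    _ = C * C' * exp (-t) * ∑ x ∈ E, ν.real (ϑ ⁻¹' bowenBall φ n x (ε / 2)) := by
        rw [Finset.mul_sum]
        exact Finset.sum_congr rfl fun x _ => by ring
    _ ≤ C * C' * exp (-t) := mul_le_of_le_one_right (by positivity) hdisj

end Opens

lemma memSV.exists_measureReal_setOf_le_birkhoff_le [BorelSpace M] [CompactSpace M]
    [IsProbabilityMeasure ν] {φ : M ≃ₜ M} {ϑ : M → M} {V : M → ℝ}
    (hSV : memSV φ V ν) (hϑc : Continuous ϑ) (hϑϑ : Involutive ϑ) (hϑφ : Semiconj ϑ φ φ.symm)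
    (hφν : MeasurePreserving φ ν ν) :
    ∃ a : ℕ → ℝ, (∀ n, 0 < a n) ∧ Tendsto (fun n : ℕ => log (a n) / n) atTop (𝓝 0) ∧
      ∀ n, 1 ≤ n → ∀ t,
        ν.real {x | t ≤ birkhoff φ (fun y => V (ϑ y) - V y) n x} ≤ a n * exp (-t) := by
  obtain ⟨ε₀, hε₀, hgibbs⟩ := hSV.exists_bounds
  obtain ⟨δ, hδ, hϑδ⟩ := Metric.uniformContinuous_iff.1
    (CompactSpace.uniformContinuous_of_continuous hϑc) (ε₀ / 2 / 2) (by positivity)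
  obtain ⟨C, hC, hClog, hCb⟩ := hgibbs (ε₀ / 2) (by positivity) (by linarith)
  obtain ⟨C', hC', hC'log, hC'b⟩ := hgibbs (min δ (ε₀ / 2)) (lt_min hδ (by positivity))
    ((min_le_right _ _).trans_lt (by linarith))
  refine ⟨fun n => C n * C' n, fun n => mul_pos (hC n) (hC' n), ?_, fun n hn t => ?_⟩
  · simpa only [add_zero] using (hClog.add hC'log).congr fun n => by
      rw [log_mul (hC n).ne' (hC' n).ne', add_div]
  obtain ⟨m, rfl⟩ := Nat.exists_eq_add_of_le' hn
  refine measureReal_le_of_le_birkhoff_sub φ.continuous hϑc.measurable (W := V ∘ ϑ)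
    (by positivity) (hC _).le (hC' _).le (fun x => (hCb _ hn x).1) (fun x => ?_) fun x hx => ?_
  · exact exp_birkhoff_comp_le_measureReal_preimage φ.continuous hφν φ.apply_symm_apply hϑφ hϑϑ
      hϑc.measurable (hC' _).le (fun a b hab => hϑδ (hab.trans_le (min_le_left _ _)))
      (fun z => (hC'b _ hn z).2) x
  · rwa [← birkhoff_sub]

end Gibbs

theorem entropy_production_nonneg_SV_general
    {M : Type*} [MetricSpace M] [CompactSpace M] [MeasurableSpace M] [BorelSpace M]
    (φ : M ≃ₜ M)
    (ϑ : M → M) (hϑc : Continuous ϑ) (hϑinv : ∀ x, ϑ (ϑ x) = x)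
    (hϑφ : ∀ x, ϑ (φ x) = φ.symm (ϑ x))
    (V : M → ℝ) (hVc : Continuous V)
    (ν : Measure M) [IsProbabilityMeasure ν]
    (hinv : ν.map (⇑φ) = ν)
    (hSV : memSV (⇑φ) V ν) :
    0 ≤ ∫ x, (V x - V (ϑ x)) ∂ν := by
  set g : M → ℝ := fun y => V (ϑ y) - V y
  have hgc : Continuous g := (hVc.comp hϑc).sub hVc
  have hφν : MeasurePreserving φ ν ν := ⟨φ.measurable, hinv⟩
  suffices hg : ∫ x, g x ∂ν ≤ 0 by
    rw [← neg_nonneg, ← integral_neg] at hg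
    simpa [g] using hg
  by_contra! hc
  set c := ∫ x, g x ∂ν
  obtain ⟨a, ha, hlog, hdev⟩ := hSV.exists_measureReal_setOf_le_birkhoff_le hϑc hϑinv hϑφ hφν
  obtain ⟨B, hB₀, hgB⟩ : ∃ B, 0 ≤ B ∧ ∀ x, g x ≤ B :=
    let ⟨B, hB⟩ := (isCompact_range hgc).bddAbove
    ⟨max B 0, le_max_right _ _, fun x => (hB (mem_range_self x)).trans (le_max_left _ _)⟩
  have hsmall : Tendsto (fun n : ℕ => B * (a n * exp (-(n * (c / 2))))) atTop (𝓝 0) := by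
    simpa using (tendsto_mul_exp_neg_mul_atTop ha hlog (half_pos hc)).const_mul B
  obtain ⟨n, hn, hlt⟩ :=
    ((eventually_ge_atTop 1).and (hsmall.eventually (gt_mem_nhds (half_pos hc)))).exists
  have hSg := continuous_birkhoff φ.continuous hgc n
  have hlower : n * c ≤ n * B * ν.real {x | n * (c / 2) ≤ birkhoff φ g n x} + n * (c / 2) := by
    rw [← integral_birkhoff hφν (hgc.integrable_of_hasCompactSupport (.of_compactSpace _))]
    exact integral_le_mul_measureReal_setOf_le_add
      (hSg.integrable_of_hasCompactSupport (.of_compactSpace _)) hSg.measurable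
      (birkhoff_le_mul hgB n) (by positivity)
  have hupper := mul_le_mul_of_nonneg_left (hdev n hn (n * (c / 2))) hB₀
  have hn' : (1 : ℝ) ≤ n := by exact_mod_cast hn
  nlinarith

/-- If `φ` has finite topological entropy, `ϑ` is a continuous time reversal, and `ν` is a
non-atomic `φ`-invariant probability measure with `ν ∈ S_V`, then
`∫ (V - V∘ϑ) dν ≥ 0`. -/
theorem entropy_production_nonneg_SV
    {M : Type*} [MetricSpace M] [CompactSpace M] [MeasurableSpace M] [BorelSpace M]
    (φ : M ≃ₜ M)
    (hfin : ∃ P : ℝ, Tendsto (fun ε : ℝ => pressureApprox (⇑φ) (fun _ => (0 : ℝ)) ε)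
      (nhdsWithin 0 (Set.Ioi 0)) (nhds (P : EReal)))
    (ϑ : M → M) (hϑc : Continuous ϑ) (hϑinv : ∀ x, ϑ (ϑ x) = x)
    (hϑφ : ∀ x, ϑ (φ x) = φ.symm (ϑ x))
    (V : M → ℝ) (hVc : Continuous V)
    (ν : Measure M) [IsProbabilityMeasure ν]
    (hatom : ∀ x : M, ν {x} = 0)
    (hinv : ν.map (⇑φ) = ν)
    (hSV : memSV (⇑φ) V ν) :
    0 ≤ ∫ x, (V x - V (ϑ x)) ∂ν :=
  entropy_production_nonneg_SV_general φ ϑ hϑc hϑinv hϑφ V hVc ν hinv hSV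
end
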